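/- arXiv:1503.02309 — 14 statements merged into one kernel-verified Lean document; each statement's English description precedes it below -/
import Mathlib

section
/- Let A be a commutative pointed monoid and X ⊆ A a finite subset with n elements such that every nonzero element of A is a finite (possibly empty) product of elements of X. Then every prime ideal p of A is generated as an ideal by p ∩ X, the map p ↦ p ∩ X is injective on the set of prime ideals of A, and consequently A has at most 2^n prime ideals; in particular, every finitely generated commutative pointed monoid has only finitely many prime ideals. -/
/-- An ideal of a commutative pointed monoid `A`: a subset containing `0`
and closed under multiplication by arbitrary elements of `A`. -/
def IsMIdeal {A : Type*} [CommMonoidWithZero A] (I : Set A) : Prop :=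
  (0 : A) ∈ I ∧ ∀ a x : A, x ∈ I → a * x ∈ I

/-- A prime ideal of a commutative pointed monoid: a proper ideal `p` such that
`a * b ∈ p` implies `a ∈ p` or `b ∈ p`. -/
def IsMPrime {A : Type*} [CommMonoidWithZero A] (p : Set A) : Prop :=
  IsMIdeal p ∧ p ≠ Set.univ ∧ ∀ a b : A, a * b ∈ p → a ∈ p ∨ b ∈ p

/-- If `A` is a commutative pointed monoid generated by a finite set `X` with `n` elements
(i.e. every nonzero element of `A` is a finite, possibly empty, product of elements of `X`),
then every prime ideal `p` is generated as an ideal by `p ∩ X`, the map `p ↦ p ∩ X` is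
injective on prime ideals, and `A` has at most `2 ^ n` prime ideals (in particular only
finitely many). -/
theorem fg_monoid_primes_generated_and_finite
    {A : Type*} [CommMonoidWithZero A] (X : Finset A) (n : ℕ) (hcard : X.card = n)
    (hgen : ∀ a : A, a ≠ 0 → a ∈ Submonoid.closure (X : Set A)) :
    (∀ p : Set A, IsMPrime p → ∀ x ∈ p, x = 0 ∨ ∃ a : A, ∃ y ∈ p ∩ (X : Set A), x = a * y) ∧
    Set.InjOn (fun p : Set A => p ∩ (X : Set A)) {p : Set A | IsMPrime p} ∧
    Set.Finite {p : Set A | IsMPrime p} ∧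
    Nat.card {p : Set A | IsMPrime p} ≤ 2 ^ n := by
  classical
  have key : ∀ p : Set A, IsMPrime p → ∀ x ∈ p,
      x = 0 ∨ ∃ a : A, ∃ y ∈ p ∩ (X : Set A), x = a * y := by
    intro p hp x hx
    by_cases hx0 : x = 0
    · exact Or.inl hx0
    · right
      have hone : (1 : A) ∉ p := by
        intro h1
        apply hp.2.1
        ext a
        simp only [Set.mem_univ, iff_true]
        have := hp.1.2 a 1 h1
        simpa using this
      have hcl := hgen x hx0
      have : ∀ z ∈ Submonoid.closure (X : Set A), z ∈ p →
          ∃ a : A, ∃ y ∈ p ∩ (X : Set A), z = a * y := by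
        intro z hz
        induction hz using Submonoid.closure_induction with
        | mem w hw => intro hwp; exact ⟨1, w, ⟨hwp, hw⟩, (one_mul w).symm⟩
        | one => intro h1; exact absurd h1 hone
        | mul u v hu hv ihu ihv =>
          intro huv
          rcases hp.2.2 u v huv with h | h
          · rcases ihu h with ⟨a, y, hy, rfl⟩
            exact ⟨a * v, y, hy, mul_right_comm a y v⟩
          · rcases ihv h with ⟨a, y, hy, rfl⟩
            exact ⟨u * a, y, hy, (mul_assoc u a y).symm⟩
      exact this x hcl hx
  have inj : Set.InjOn (fun p : Set A => p ∩ (X : Set A)) {p : Set A | IsMPrime p} := by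
    intro p hp q hq h
    have sub : ∀ p q : Set A, IsMPrime p → IsMPrime q →
        p ∩ (X : Set A) = q ∩ (X : Set A) → p ⊆ q := by
      intro p q hp hq h x hx
      rcases key p hp x hx with rfl | ⟨a, y, hy, rfl⟩
      · exact hq.1.1
      · have : y ∈ q ∩ (X : Set A) := h ▸ hy
        exact hq.1.2 a y this.1
    exact Set.Subset.antisymm (sub p q hp hq h) (sub q p hq hp h.symm)
  -- finiteness via injection into powerset of X
  have hmaps : Set.MapsTo (fun p : Set A => p ∩ (X : Set A)) {p : Set A | IsMPrime p}
      {s : Set A | s ⊆ (X : Set A)} := fun p _ => Set.inter_subset_right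
  have hfinpow : Set.Finite {s : Set A | s ⊆ (X : Set A)} :=
    (X.finite_toSet).finite_subsets
  have hfin : Set.Finite {p : Set A | IsMPrime p} :=
    Set.Finite.of_finite_image (hfinpow.subset (Set.image_subset_iff.mpr hmaps)) inj
  refine ⟨key, inj, hfin, ?_⟩
  have hg : ∀ p : {p : Set A | IsMPrime p}, X.filter (· ∈ (p : Set A)) ∈ X.powerset := by
    intro p; exact Finset.mem_powerset.mpr (Finset.filter_subset _ _)
  have hginj : Function.Injective
      (fun p : {p : Set A | IsMPrime p} => (⟨X.filter (· ∈ (p : Set A)), hg p⟩ : X.powerset)) := by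
    intro p q h
    apply Subtype.ext
    apply inj p.2 q.2
    simp only [Subtype.mk.injEq] at h
    ext x
    constructor
    · intro hx
      have : x ∈ X.filter (· ∈ (p : Set A)) := Finset.mem_filter.mpr ⟨hx.2, hx.1⟩
      rw [h] at this
      exact ⟨(Finset.mem_filter.mp this).2, hx.2⟩
    · intro hx
      have : x ∈ X.filter (· ∈ (q : Set A)) := Finset.mem_filter.mpr ⟨hx.2, hx.1⟩
      rw [← h] at this
      exact ⟨(Finset.mem_filter.mp this).2, hx.2⟩
  calc Nat.card {p : Set A | IsMPrime p} ≤ Nat.card X.powerset :=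
        Nat.card_le_card_of_injective _ hginj
    _ = 2 ^ n := by rw [Nat.card_eq_finsetCard, Finset.card_powerset, hcard]
end

section
/- Every irreducible ideal of a noetherian commutative pointed monoid is primary: if A is a noetherian commutative pointed monoid and I is a proper ideal of A such that whenever I = J ∩ K for ideals J, K one has I = J or I = K, then for all x, y ∈ A with xy ∈ I, either x ∈ I or yⁿ ∈ I for some n ≥ 1. -/
/-- A commutative pointed monoid is noetherian if every ascending chain of ideals
stabilizes. -/
def MonNoetherian (A : Type*) [CommMonoidWithZero A] : Prop :=
  ∀ c : ℕ → Set A, (∀ n, IsMIdeal (c n)) → (∀ n, c n ⊆ c (n + 1)) →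
    ∃ N, ∀ m, N ≤ m → c m = c N

/-- Every irreducible ideal of a noetherian commutative pointed monoid is primary:
if `I` is a proper ideal such that `I = J ∩ K` for ideals `J, K` implies `I = J` or `I = K`,
then `x * y ∈ I` implies `x ∈ I` or `y ^ n ∈ I` for some `n ≥ 1`. -/
theorem irreducible_ideal_is_primary
    {A : Type*} [CommMonoidWithZero A] (hN : MonNoetherian A)
    (I : Set A) (hI : IsMIdeal I) (hproper : I ≠ Set.univ)
    (hirr : ∀ J K : Set A, IsMIdeal J → IsMIdeal K → I = J ∩ K → I = J ∨ I = K) :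
    ∀ x y : A, x * y ∈ I → x ∈ I ∨ ∃ n : ℕ, 1 ≤ n ∧ y ^ n ∈ I := by
  intro x y hxy
  by_contra hcon
  push_neg at hcon
  obtain ⟨hx, hy⟩ := hcon
  set c : ℕ → Set A := fun n => {a | a * y ^ n ∈ I} with hc
  have hcid : ∀ n, IsMIdeal (c n) := by
    intro n
    constructor
    · show (0:A) * y ^ n ∈ I
      rw [zero_mul]; exact hI.1
    · intro a b hb
      show a * b * y ^ n ∈ I
      rw [mul_assoc]
      exact hI.2 a _ hb
  have hmono : ∀ n, c n ⊆ c (n + 1) := by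
    intro n a ha
    show a * y ^ (n + 1) ∈ I
    have : a * y ^ (n + 1) = y * (a * y ^ n) := by
      rw [pow_succ, ← mul_assoc, mul_comm (a * y ^ n) y]
    rw [this]
    exact hI.2 y _ ha
  obtain ⟨N0, hN0⟩ := hN c hcid hmono
  set N := N0 + 1 with hNdef
  have hstab : c (N + N) = c N := by
    rw [hN0 (N + N) (by omega), hN0 N (by omega)]
  set J : Set A := I ∪ {z | ∃ a, z = a * y ^ N} with hJ
  have hJid : IsMIdeal J := by
    constructor
    · exact Or.inl hI.1
    · rintro a z (hz | ⟨b, rfl⟩)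
      · exact Or.inl (hI.2 a z hz)
      · exact Or.inr ⟨a * b, (mul_assoc a b _).symm⟩
  have hIJK : I = J ∩ c N := by
    apply Set.Subset.antisymm
    · intro z hz
      refine ⟨Or.inl hz, ?_⟩
      show z * y ^ N ∈ I
      rw [mul_comm]
      exact hI.2 _ z hz
    · rintro z ⟨hzJ | ⟨a, rfl⟩, hzK⟩
      · exact hzJ
      · have h1 : a * y ^ N * y ^ N ∈ I := hzK
        have h2 : a ∈ c (N + N) := by
          show a * y ^ (N + N) ∈ I
          rwa [pow_add, ← mul_assoc]
        rw [hstab] at h2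
        exact h2
  rcases hirr J (c N) hJid (hcid N) hIJK with h | h
  · have : y ^ N ∈ J := Or.inr ⟨1, (one_mul _).symm⟩
    rw [← h] at this
    exact absurd this (hy N (by omega)).elim
  · have : x ∈ c N := by
      show x * y ^ N ∈ I
      have : x * y ^ N = y ^ N0 * (x * y) := by
        rw [hNdef, pow_succ, mul_comm (y ^ N0) y, ← mul_assoc, mul_comm]
      rw [this]
      exact hI.2 _ _ hxy
    rw [← h] at this
    exact hx this
end

section
/- Primary decomposition: in a noetherian commutative pointed monoid A, every proper ideal I can be written as a finite intersection I = q₁ ∩ ⋯ ∩ qₙ of primary ideals of A (which may moreover all be taken to be irreducible). -/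
/-- A primary ideal of a commutative pointed monoid. -/
def IsMPrimary {A : Type*} [CommMonoidWithZero A] (q : Set A) : Prop :=
  IsMIdeal q ∧ q ≠ Set.univ ∧ ∀ x y : A, x * y ∈ q → x ∈ q ∨ ∃ n : ℕ, 1 ≤ n ∧ y ^ n ∈ q

/-- An irreducible ideal of a commutative pointed monoid: a proper ideal `I` such that
whenever `I = J ∩ K` for ideals `J, K`, one has `I = J` or `I = K`. -/
def IsMIrreducible {A : Type*} [CommMonoidWithZero A] (I : Set A) : Prop :=
  IsMIdeal I ∧ I ≠ Set.univ ∧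
    ∀ J K : Set A, IsMIdeal J → IsMIdeal K → I = J ∩ K → I = J ∨ I = K

lemma exists_maximal_mideal {A : Type*} [CommMonoidWithZero A] (hN : MonNoetherian A)
    (S : Set (Set A)) (hS : ∀ I ∈ S, IsMIdeal I) (hne : S.Nonempty) :
    ∃ M ∈ S, ∀ J ∈ S, M ⊆ J → M = J := by
  by_contra h
  push_neg at h
  obtain ⟨I0, hI0⟩ := hne
  choose g hgS hgsub hgne using h
  let f : ℕ → {x : Set A // x ∈ S} := fun n =>
    Nat.rec ⟨I0, hI0⟩ (fun _ p => ⟨g p.1 p.2, hgS p.1 p.2⟩) n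
  have hmono : ∀ n, (f n).1 ⊆ (f (n+1)).1 := fun n => hgsub _ _
  have hne' : ∀ n, (f n).1 ≠ (f (n+1)).1 := fun n => hgne _ _
  obtain ⟨N, hNs⟩ := hN (fun n => (f n).1) (fun n => hS _ (f n).2) hmono
  exact hne' N ((hNs (N+1) (by omega)).symm)

lemma irreducible_primary {A : Type*} [CommMonoidWithZero A] (hN : MonNoetherian A)
    (q : Set A) (hq : IsMIrreducible q) : IsMPrimary q := by
  obtain ⟨hid, hproper, hirr⟩ := hq
  refine ⟨hid, hproper, ?_⟩
  intro x y hxy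
  -- chain c m = (q : y^m)
  set c : ℕ → Set A := fun m => {a | a * y ^ m ∈ q} with hc
  have cid : ∀ m, IsMIdeal (c m) := by
    intro m
    refine ⟨?_, ?_⟩
    · show (0:A) * y ^ m ∈ q; rw [zero_mul]; exact hid.1
    · intro a b hb
      show a * b * y ^ m ∈ q
      rw [mul_assoc]; exact hid.2 a _ hb
  have cmono : ∀ m, c m ⊆ c (m+1) := by
    intro m a ha
    show a * y ^ (m+1) ∈ q
    have : a * y ^ (m+1) = y * (a * y ^ m) := by
      rw [pow_succ, ← mul_assoc, mul_comm]
    rw [this]; exact hid.2 y _ ha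
  obtain ⟨N, hNs⟩ := hN c cid cmono
  set n := N + 1 with hn
  -- K = q ∪ A y^n
  set K : Set A := q ∪ {z | ∃ a, z = a * y ^ n} with hK
  have Kid : IsMIdeal K := by
    refine ⟨Or.inl hid.1, ?_⟩
    rintro a z (hz | ⟨b, rfl⟩)
    · exact Or.inl (hid.2 a z hz)
    · exact Or.inr ⟨a * b, (mul_assoc a b _).symm⟩
  have heq : q = c n ∩ K := by
    ext z
    constructor
    · intro hz
      refine ⟨?_, Or.inl hz⟩
      show z * y ^ n ∈ q
      rw [mul_comm]; exact hid.2 _ _ hz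
    · rintro ⟨hz1, hz2 | ⟨a, rfl⟩⟩
      · exact hz2
      · have h2n : a ∈ c (2 * n) := by
          show a * y ^ (2*n) ∈ q
          have : a * y ^ (2*n) = (a * y ^ n) * y ^ n := by
            rw [two_mul, pow_add, ← mul_assoc]
          rw [this]; exact hz1
        have : c (2 * n) = c n := by
          rw [hNs (2*n) (by omega), hNs n (by omega)]
        rw [this] at h2n
        exact h2n
  rcases hirr (c n) K (cid n) Kid heq with h | h
  · left
    have hx : x ∈ c n := by
      show x * y ^ n ∈ q
      have he : x * y ^ n = (x * y) * y ^ N := by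
        rw [hn, pow_succ', ← mul_assoc, mul_assoc x y, mul_comm y (y ^ N), ← mul_assoc]
      rw [he, mul_comm]
      exact hid.2 _ _ hxy
    rwa [← h] at hx
  · right
    refine ⟨n, by omega, ?_⟩
    have : y ^ n ∈ K := Or.inr ⟨1, by rw [one_mul]⟩
    rwa [← h] at this

/-- Primary decomposition: in a noetherian commutative pointed monoid every proper ideal is
a finite intersection of primary (and moreover irreducible) ideals. -/
theorem primary_decomposition
    {A : Type*} [CommMonoidWithZero A] (hN : MonNoetherian A)
    (I : Set A) (hI : IsMIdeal I) (hproper : I ≠ Set.univ) :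
    ∃ (n : ℕ) (q : Fin n → Set A),
      (∀ i, IsMPrimary (q i) ∧ IsMIrreducible (q i)) ∧ I = ⋂ i, q i := by
  classical
  by_contra hcon
  set P : Set A → Prop := fun J => ∃ (n : ℕ) (q : Fin n → Set A),
      (∀ i, IsMPrimary (q i) ∧ IsMIrreducible (q i)) ∧ J = ⋂ i, q i with hP
  set S : Set (Set A) := {J | IsMIdeal J ∧ J ≠ Set.univ ∧ ¬ P J} with hSdef
  have hIS : I ∈ S := ⟨hI, hproper, hcon⟩
  obtain ⟨M, hMS, hMmax⟩ := exists_maximal_mideal hN S (fun J hJ => hJ.1) ⟨I, hIS⟩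
  obtain ⟨hMid, hMproper, hMnP⟩ := hMS
  by_cases hirr : IsMIrreducible M
  · apply hMnP
    refine ⟨1, fun _ => M, fun _ => ⟨irreducible_primary hN M hirr, hirr⟩, ?_⟩
    exact (Set.iInter_const M).symm
  · -- not irreducible: decompose
    have : ∃ J K : Set A, IsMIdeal J ∧ IsMIdeal K ∧ M = J ∩ K ∧ M ≠ J ∧ M ≠ K := by
      by_contra hcon2
      push_neg at hcon2
      exact hirr ⟨hMid, hMproper, fun J K hJ hK hJK => by
        by_contra hne; push_neg at hne
        exact hne.2 (hcon2 J K hJ hK hJK hne.1)⟩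
    obtain ⟨J, K, hJid, hKid, hJK, hMJ, hMK⟩ := this
    have hJprop : J ≠ Set.univ := by
      intro h; apply hMK; rw [hJK, h, Set.univ_inter]
    have hKprop : K ≠ Set.univ := by
      intro h; apply hMJ; rw [hJK, h, Set.inter_univ]
    have hMsubJ : M ⊆ J := by rw [hJK]; exact Set.inter_subset_left
    have hMsubK : M ⊆ K := by rw [hJK]; exact Set.inter_subset_right
    have hPJ : P J := by
      by_contra h
      exact hMJ (hMmax J ⟨hJid, hJprop, h⟩ hMsubJ)
    have hPK : P K := by
      by_contra h
      exact hMK (hMmax K ⟨hKid, hKprop, h⟩ hMsubK)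
    obtain ⟨n1, q1, hq1, hJeq⟩ := hPJ
    obtain ⟨n2, q2, hq2, hKeq⟩ := hPK
    apply hMnP
    refine ⟨n1 + n2, fun i => if h : (i : ℕ) < n1 then q1 ⟨i.1, h⟩
      else q2 ⟨i.1 - n1, by omega⟩, ?_, ?_⟩
    · intro i
      by_cases h : (i : ℕ) < n1
      · simpa [h] using hq1 ⟨i.1, h⟩
      · simpa [h] using hq2 ⟨i.1 - n1, by omega⟩
    · rw [hJK, hJeq, hKeq]
      ext x
      simp only [Set.mem_inter_iff, Set.mem_iInter]
      constructor
      · rintro ⟨h1, h2⟩ i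
        by_cases h : (i : ℕ) < n1
        · simpa [h] using h1 ⟨i.1, h⟩
        · simpa [h] using h2 ⟨i.1 - n1, by omega⟩
      · intro h
        constructor
        · intro j
          have := h ⟨j.1, by omega⟩
          have hj : (j : ℕ) < n1 := j.2
          simpa [hj] using this
        · intro j
          have := h ⟨n1 + j.1, by omega⟩
          have hj : ¬ (n1 + j.1 < n1) := by omega
          have he : (⟨n1 + j.1 - n1, by omega⟩ : Fin n2) = j := by
            ext; simp
          simpa [hj, he] using this
end

section
/- Let A be a commutative pointed monoid and I an ideal of A with a minimal primary decomposition I = q₁ ∩ ⋯ ∩ qₙ where qᵢ is pᵢ-primary. Then {p₁, …, pₙ} is exactly the set of prime ideals of A of the form √(I : a) for some a ∈ A, where (I : a) = {b ∈ A : ab ∈ I}; in particular this set is independent of the chosen minimal primary decomposition. Moreover, the minimal elements of {p₁, …, pₙ} with respect to inclusion are exactly the prime ideals of A that contain I and are minimal among the primes containing I. -/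
/-- The radical of an ideal: all `a` with `a ^ n ∈ I` for some `n ≥ 1`. -/
def mRadical {A : Type*} [CommMonoidWithZero A] (I : Set A) : Set A :=
  {a : A | ∃ n : ℕ, 1 ≤ n ∧ a ^ n ∈ I}

/-!
Write `√(I : a)` for the radical of `{b | a * b ∈ I}`. For a `p`-primary `q`, `√(q : a)` is
everything when `a ∈ q` and `p` otherwise, and radicals commute with finite intersections, so
`√(I : a)` is the intersection of the `pᵢ` with `a ∉ qᵢ`. A prime that is a finite
intersection of ideals equals one of them (prime avoidance for products), so every prime of the
form `√(I : a)` is some `pᵢ`; conversely minimality gives `a ∈ ⋂_{j ≠ i} qⱼ \ qᵢ`, and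
then `√(I : a) = pᵢ`. The same avoidance argument shows that every prime containing `I` contains
some `pᵢ`, which identifies the minimal `pᵢ` with the minimal primes over `I`.
-/

section

variable {A : Type*} [CommMonoidWithZero A]

theorem IsMIdeal.eq_univ_of_one_mem {I : Set A} (hI : IsMIdeal I) (h : (1 : A) ∈ I) :
    I = Set.univ :=
  Set.eq_univ_of_forall fun a => by simpa using hI.2 a 1 h

theorem IsMIdeal.pow_mem_of_le {I : Set A} (hI : IsMIdeal I) {b : A} {k m : ℕ}
    (hb : b ^ k ∈ I) (hkm : k ≤ m) : b ^ m ∈ I := by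
  rw [← Nat.sub_add_cancel hkm, pow_add]
  exact hI.2 _ _ hb

theorem IsMIdeal.colon {I : Set A} (hI : IsMIdeal I) (a : A) : IsMIdeal {b | a * b ∈ I} :=
  ⟨by simpa using hI.1, fun c x hx => by simpa [mul_left_comm] using hI.2 c _ hx⟩

theorem subset_mRadical (I : Set A) : I ⊆ mRadical I :=
  fun a ha => ⟨1, le_rfl, by simpa using ha⟩

theorem IsMIdeal.radical {I : Set A} (hI : IsMIdeal I) : IsMIdeal (mRadical I) :=
  ⟨subset_mRadical I hI.1, fun a _ ⟨m, hm, hx⟩ =>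
    ⟨m, hm, by rw [mul_pow]; exact hI.2 _ _ hx⟩⟩

theorem mRadical_iInter {ι : Type*} [Fintype ι] {J : ι → Set A} (hJ : ∀ i, IsMIdeal (J i)) :
    mRadical (⋂ i, J i) = ⋂ i, mRadical (J i) := by
  refine subset_antisymm
    (Set.subset_iInter fun i => fun b ⟨m, hm, hb⟩ => ⟨m, hm, Set.mem_iInter.mp hb i⟩) ?_
  intro b hb
  choose k _ hk using Set.mem_iInter.mp hb
  refine ⟨∑ i, k i + 1, Nat.le_add_left 1 _, Set.mem_iInter.mpr fun i => ?_⟩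
  exact (hJ i).pow_mem_of_le (hk i)
    ((Finset.single_le_sum (fun _ _ => Nat.zero_le _) (Finset.mem_univ i)).trans (Nat.le_succ _))

theorem IsMIdeal.mRadical_colon_of_mem {I : Set A} (hI : IsMIdeal I) {a : A} (ha : a ∈ I) :
    mRadical {b | a * b ∈ I} = Set.univ :=
  ((hI.colon a).radical).eq_univ_of_one_mem (subset_mRadical _ (by simpa using ha))

theorem mem_mRadical_of_pow_mem_mRadical {I : Set A} {b : A} {m : ℕ} (hm : 1 ≤ m)
    (h : b ^ m ∈ mRadical I) : b ∈ mRadical I :=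
  let ⟨k, hk, hbk⟩ := h
  ⟨m * k, Nat.one_le_iff_ne_zero.mpr (Nat.mul_ne_zero (by omega) (by omega)), by rwa [pow_mul]⟩

theorem IsMPrimary.mRadical_colon_of_notMem {q : Set A} (hq : IsMPrimary q) {a : A}
    (ha : a ∉ q) : mRadical {b | a * b ∈ q} = mRadical q :=
  subset_antisymm
    (fun _ ⟨_, hm, hb⟩ => mem_mRadical_of_pow_mem_mRadical hm ((hq.2.2 a _ hb).resolve_left ha))
    fun _ ⟨m, hm, hb⟩ => ⟨m, hm, hq.1.2 a _ hb⟩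

theorem IsMPrime.one_notMem {P : Set A} (hP : IsMPrime P) : (1 : A) ∉ P :=
  fun h => hP.2.1 (hP.1.eq_univ_of_one_mem h)

theorem IsMPrime.mem_of_pow_mem {P : Set A} (hP : IsMPrime P) {a : A} {n : ℕ}
    (h : a ^ n ∈ P) : a ∈ P := by
  induction n with
  | zero => exact absurd (by simpa using h) hP.one_notMem
  | succ n ih =>
    rw [pow_succ] at h
    exact (hP.2.2 _ _ h).elim ih id

theorem IsMPrime.mRadical_subset {P I : Set A} (hP : IsMPrime P) (h : I ⊆ P) :
    mRadical I ⊆ P :=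
  fun _ ⟨_, _, ha⟩ => hP.mem_of_pow_mem (h ha)

theorem IsMPrimary.isMPrime_mRadical {q : Set A} (hq : IsMPrimary q) : IsMPrime (mRadical q) := by
  refine ⟨hq.1.radical, fun h => hq.2.1 (hq.1.eq_univ_of_one_mem ?_), ?_⟩
  · obtain ⟨m, _, hm⟩ : (1 : A) ∈ mRadical q := h ▸ Set.mem_univ 1
    simpa using hm
  · rintro a b ⟨m, hm, hab⟩
    rw [mul_pow] at hab
    exact (hq.2.2 _ _ hab).imp (fun ha => ⟨m, hm, ha⟩) (mem_mRadical_of_pow_mem_mRadical hm)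

theorem IsMPrime.exists_mem_of_prod_mem {ι : Type*} {P : Set A} (hP : IsMPrime P) {x : ι → A}
    {s : Finset ι} (h : ∏ i ∈ s, x i ∈ P) : ∃ i ∈ s, x i ∈ P := by
  classical
  induction s using Finset.induction_on with
  | empty => exact absurd (by simpa using h) hP.one_notMem
  | insert j s _ ih =>
    rw [Finset.prod_insert ‹_›] at h
    rcases hP.2.2 _ _ h with hj | hs
    · exact ⟨j, Finset.mem_insert_self _ _, hj⟩
    · obtain ⟨i, hi, hxi⟩ := ih hs
      exact ⟨i, Finset.mem_insert_of_mem hi, hxi⟩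

theorem IsMPrime.exists_subset_of_iInter_subset {ι : Type*} [Fintype ι] {P : Set A}
    (hP : IsMPrime P) {J : ι → Set A} (hJ : ∀ i, IsMIdeal (J i)) (h : ⋂ i, J i ⊆ P) :
    ∃ i, J i ⊆ P := by
  classical
  by_contra! hc
  choose x hx hxP using fun i => Set.not_subset.mp (hc i)
  have hprod : ∏ i, x i ∈ ⋂ i, J i := Set.mem_iInter.mpr fun i => by
    rw [← Finset.mul_prod_erase _ x (Finset.mem_univ i), mul_comm]
    exact (hJ i).2 _ _ (hx i)
  obtain ⟨i, _, hxi⟩ := hP.exists_mem_of_prod_mem (h hprod)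
  exact hxP i hxi

theorem IsMPrime.exists_eq_of_eq_iInter {ι : Type*} [Fintype ι] {P : Set A} (hP : IsMPrime P)
    {J : ι → Set A} (hJ : ∀ i, IsMIdeal (J i)) (h : P = ⋂ i, J i) : ∃ i, P = J i :=
  (hP.exists_subset_of_iInter_subset hJ h.ge).imp fun i hi =>
    subset_antisymm (h.le.trans (Set.iInter_subset J i)) hi

theorem mRadical_colon_iInter {ι : Type*} [Fintype ι] {q : ι → Set A}
    (hq : ∀ i, IsMIdeal (q i)) (a : A) :
    mRadical {b | a * b ∈ ⋂ i, q i} = ⋂ i, mRadical {b | a * b ∈ q i} := by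
  rw [← mRadical_iInter fun i => (hq i).colon a]
  congr 1
  ext b
  simp only [Set.mem_ofPred_eq, Set.mem_iInter]

end

theorem associated_primes_of_minimal_primary_decomposition_general
    {A : Type*} [CommMonoidWithZero A] (n : ℕ) (q p : Fin n → Set A)
    (hprimary : ∀ i, IsMPrimary (q i)) (hrad : ∀ i, mRadical (q i) = p i)
    (hmin : ∀ i, ¬ (⋂ j, ⋂ (_ : j ≠ i), q j) ⊆ q i)
    (I : Set A) (hI : I = ⋂ i, q i) :
    ({P : Set A | ∃ i, P = p i} =
      {P : Set A | IsMPrime P ∧ ∃ a : A, P = mRadical {b : A | a * b ∈ I}}) ∧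
    ({P : Set A | (∃ i, P = p i) ∧ ∀ Q : Set A, (∃ i, Q = p i) → Q ⊆ P → Q = P} =
      {P : Set A | IsMPrime P ∧ I ⊆ P ∧
        ∀ Q : Set A, IsMPrime Q → I ⊆ Q → Q ⊆ P → Q = P}) := by
  have hideal i : IsMIdeal (q i) := (hprimary i).1
  have hprime i : IsMPrime (p i) := hrad i ▸ (hprimary i).isMPrime_mRadical
  have hIp i : I ⊆ p i := hI ▸ (Set.iInter_subset q i).trans (hrad i ▸ subset_mRadical _)
  have hcolon a : mRadical {b | a * b ∈ I} = ⋂ i, mRadical {b | a * b ∈ q i} :=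
    hI ▸ mRadical_colon_iInter hideal a
  refine ⟨Set.ext fun P => ⟨?_, ?_⟩, Set.ext fun P => ?_⟩
  · rintro ⟨i, rfl⟩
    obtain ⟨a, ha, hai⟩ := Set.not_subset.mp (hmin i)
    refine ⟨hprime i, a, ?_⟩
    rw [hcolon, ← hrad i, ← (hprimary i).mRadical_colon_of_notMem hai]
    refine subset_antisymm (Set.subset_iInter fun j => ?_) (Set.iInter_subset _ i)
    rcases eq_or_ne j i with rfl | hji
    · exact le_rfl
    · rw [(hideal j).mRadical_colon_of_mem (Set.mem_iInter₂.mp ha j hji)]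
      exact Set.subset_univ _
  · rintro ⟨hP, a, rfl⟩
    obtain ⟨i, hPi⟩ :=
      hP.exists_eq_of_eq_iInter (fun i => ((hideal i).colon a).radical) (hcolon a)
    have hai : a ∉ q i := fun hai =>
      hP.2.1 (hPi.trans ((hideal i).mRadical_colon_of_mem hai))
    exact ⟨i, hPi.trans ((hprimary i).mRadical_colon_of_notMem hai |>.trans (hrad i))⟩
  · have hlower : ∀ ⦃P⦄, IsMPrime P ∧ I ⊆ P → ∃ Q, Q ⊆ P ∧ ∃ i, Q = p i := by
      rintro P ⟨hP, hIP⟩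
      obtain ⟨j, hj⟩ := hP.exists_subset_of_iInter_subset hideal (hI ▸ hIP)
      exact ⟨p j, hrad j ▸ hP.mRadical_subset hj, j, rfl⟩
    have hminimal := minimal_iff_minimal_of_imp_of_forall (x := P)
      (fun _ ⟨i, hi⟩ => hi ▸ ⟨hprime i, hIp i⟩) hlower
    simpa [minimal_iff, eq_comm, and_assoc] using hminimal.symm

/-- For a minimal primary decomposition `I = q₁ ∩ ⋯ ∩ qₙ` with `qᵢ` being `pᵢ`-primary,
the set `{p₁, …, pₙ}` is exactly the set of primes of the form `√(I : a)`, `a ∈ A`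
(hence independent of the decomposition), and its minimal elements are exactly the
primes containing `I` that are minimal among the primes containing `I`. -/
theorem associated_primes_of_minimal_primary_decomposition
    {A : Type*} [CommMonoidWithZero A] (n : ℕ) (q p : Fin n → Set A)
    (hprimary : ∀ i, IsMPrimary (q i)) (hrad : ∀ i, mRadical (q i) = p i)
    (hdistinct : Function.Injective p)
    (hmin : ∀ i, ¬ (⋂ j, ⋂ (_ : j ≠ i), q j) ⊆ q i)
    (I : Set A) (hI : I = ⋂ i, q i) :
    ({P : Set A | ∃ i, P = p i} =
      {P : Set A | IsMPrime P ∧ ∃ a : A, P = mRadical {b : A | a * b ∈ I}}) ∧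
    ({P : Set A | (∃ i, P = p i) ∧ ∀ Q : Set A, (∃ i, Q = p i) → Q ⊆ P → Q = P} =
      {P : Set A | IsMPrime P ∧ I ⊆ P ∧
        ∀ Q : Set A, IsMPrime Q → I ⊆ Q → Q ⊆ P → Q = P}) :=
  associated_primes_of_minimal_primary_decomposition_general n q p hprimary hrad hmin I hI
end

section
/- A commutative pointed monoid A is finitely generated (there is a finite subset X ⊆ A such that every nonzero element of A is a finite, possibly empty, product of elements of X) if and only if the congruences on A satisfy the ascending chain condition: every increasing sequence c₁ ≤ c₂ ≤ ⋯ of congruences on A is eventually constant. -/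
/-!
Finitely generated ⇒ ACC: `c ↦ ker (ℤ[M] → ℤ[M ⧸ c])` embeds the congruences of `M` into the
ideals of `ℤ[M]`, a Noetherian ring by Hilbert's basis theorem.

ACC ⇒ finitely generated: by Noetherian induction on `c` it suffices to show that `M` is finitely
generated once every proper quotient `M ⧸ d` (`d ≠ ⊥`) is. Rees congruences turn ACC into
finite generation of every ideal of `M` and well-foundedness of strict divisibility; the
congruences `x ~ y ↔ x ∈ y S` turn it into finite generation of the unit group. So the units and
the irreducibles (up to units, the generators of the ideal of nonunits) lie in a finitely
generated submonoid, and factoring by well-founded recursion shows that every other `x` satisfies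
`x * m = x` for a nonunit `m`. These `x` form a finitely generated ideal, and the elements fixed
by one `m` lie in the submonoid generated by `m` and lifts of generators of the proper quotient
`M ⧸ (m ~ 1)`.
-/

open Function

namespace Con

section Monoid

variable {M N : Type*} [Monoid M] [Monoid N]

theorem lt_ker_comp_of_ne_bot {c : Con M} {d : Con c.Quotient}
    (hd : d ≠ ⊥) : c < ker (d.mk'.comp c.mk') := by
  refine lt_of_le_not_ge (fun x y h => (ker_rel _).2 ?_) fun hle => hd ?_
  · exact congrArg d.mk' (c.eq.2 h)
  · refine eq_bot_iff.2 fun q r hqr => ?_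
    obtain ⟨x, rfl⟩ := c.mk'_surjective q
    obtain ⟨y, rfl⟩ := c.mk'_surjective r
    exact c.eq.2 (hle ((ker_rel _).2 (d.eq.2 hqr)))

def comapOrderEmbedding (f : M →* N) (hf : Surjective f) : Con N ↪o Con M :=
  OrderEmbedding.ofMapLEIff (fun d => d.comap f (map_mul f)) fun _ _ => by
    refine ⟨fun h x y hxy => ?_, fun h _ _ hxy => h hxy⟩
    obtain ⟨x, rfl⟩ := hf x
    obtain ⟨y, rfl⟩ := hf y
    exact h hxy

theorem wellFoundedGT_of_surjective [WellFoundedGT (Con M)] (f : M →* N) (hf : Surjective f) :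
    WellFoundedGT (Con N) :=
  (comapOrderEmbedding f hf).wellFoundedGT

section MonoidAlgebra

variable (R : Type*) [CommRing R]

noncomputable def monoidAlgebraKer (c : Con M) : Ideal (MonoidAlgebra R M) :=
  RingHom.ker (MonoidAlgebra.mapDomainRingHom R c.mk')

theorem single_sub_single_mem_monoidAlgebraKer [Nontrivial R] {c : Con M} {x y : M} :
    MonoidAlgebra.single x (1 : R) - MonoidAlgebra.single y 1 ∈ c.monoidAlgebraKer R ↔ c x y := by
  rw [monoidAlgebraKer, RingHom.mem_ker, map_sub, sub_eq_zero,
    MonoidAlgebra.mapDomainRingHom_apply, MonoidAlgebra.mapDomainRingHom_apply,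
    MonoidAlgebra.mapDomain_single, MonoidAlgebra.mapDomain_single,
    (MonoidAlgebra.single_left_injective one_ne_zero).eq_iff]
  exact c.eq

theorem monoidAlgebraKer_mono : Monotone (monoidAlgebraKer (M := M) R) := fun c d h p hp => by
  have hd : d.mk' = (c.map d h).comp c.mk' := rfl
  rw [monoidAlgebraKer, RingHom.mem_ker, hd, MonoidAlgebra.mapDomainRingHom_comp,
    RingHom.comp_apply, RingHom.mem_ker.1 hp, map_zero]

noncomputable def monoidAlgebraKerOrderEmbedding [Nontrivial R] :
    Con M ↪o Ideal (MonoidAlgebra R M) :=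
  OrderEmbedding.ofMapLEIff (monoidAlgebraKer R) fun _ _ =>
    ⟨fun h _ _ hxy => (single_sub_single_mem_monoidAlgebraKer R).1
        (h ((single_sub_single_mem_monoidAlgebraKer R).2 hxy)),
      fun h => monoidAlgebraKer_mono R h⟩

end MonoidAlgebra

end Monoid

variable {M : Type*} [CommMonoid M]

theorem wellFoundedGT_of_fg [Monoid.FG M] : WellFoundedGT (Con M) :=
  have := Algebra.FiniteType.isNoetherianRing ℤ (MonoidAlgebra ℤ M)
  (monoidAlgebraKerOrderEmbedding ℤ).wellFoundedGT

def powers (m : M) : Con M where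
  r x y := ∃ i j : ℕ, x * m ^ i = y * m ^ j
  iseqv.refl _ := ⟨0, 0, rfl⟩
  iseqv.symm := fun ⟨i, j, h⟩ => ⟨j, i, h.symm⟩
  iseqv.trans := by
    rintro x y z ⟨i, j, h⟩ ⟨k, l, h'⟩
    refine ⟨i + k, l + j, ?_⟩
    rw [pow_add, ← mul_assoc, h, mul_right_comm, h', mul_assoc, ← pow_add]
  mul' := by
    rintro a b c d ⟨i, j, h⟩ ⟨k, l, h'⟩
    refine ⟨i + k, j + l, ?_⟩
    rw [pow_add, pow_add, mul_mul_mul_comm a c, h, h', mul_mul_mul_comm b (m ^ j)]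

theorem powers_ne_bot {m : M} (hm : m ≠ 1) : powers m ≠ ⊥ := fun h => by
  have hm1 : powers m m 1 := ⟨0, 1, by simp⟩
  rw [h] at hm1
  exact hm hm1

end Con

namespace SemigroupIdeal

section Rees

variable {T : Type*} [CommSemigroup T]

def reesCon (I : SemigroupIdeal T) : Con T where
  r x y := x = y ∨ x ∈ I ∧ y ∈ I
  iseqv.refl _ := .inl rfl
  iseqv.symm := by rintro _ _ (rfl | ⟨hx, hy⟩) <;> simp_all
  iseqv.trans := by rintro _ _ _ (rfl | ⟨hx, hy⟩) (rfl | ⟨hy', hz⟩) <;> simp_all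
  mul' := by
    rintro w x y z (rfl | ⟨hw, hx⟩) (rfl | ⟨hy, hz⟩)
    · exact .inl rfl
    · exact .inr ⟨I.mul_mem w hy, I.mul_mem w hz⟩
    · exact .inr ⟨mul_comm y w ▸ I.mul_mem y hw, mul_comm y x ▸ I.mul_mem y hx⟩
    · exact .inr ⟨I.mul_mem w hy, I.mul_mem x hz⟩

theorem reesCon_mono : Monotone (reesCon (T := T)) := by
  rintro I J hIJ x y (rfl | ⟨hx, hy⟩)
  exacts [.inl rfl, .inr ⟨hIJ hx, hIJ hy⟩]

theorem reesCon_lt_reesCon {I J : SemigroupIdeal T} (hIJ : I < J) (hI : (I : Set T).Nonempty) :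
    reesCon I < reesCon J := by
  refine (reesCon_mono hIJ.le).lt_of_not_ge fun hJI => ?_
  obtain ⟨a, ha⟩ := hI
  obtain ⟨b, hbJ, hbI⟩ := SetLike.exists_of_lt hIJ
  rcases hJI (Or.inr ⟨hbJ, hIJ.le ha⟩ : reesCon J b a) with rfl | ⟨hb, -⟩
  exacts [hbI ha, hbI hb]

end Rees

variable {T : Type*} [CommMonoid T]

theorem mem_closure_singleton {a x : T} : x ∈ closure {a} ↔ a ∣ x := by
  simp [mem_closure'', Dvd.dvd, mul_comm, eq_comm]

theorem closure_singleton_lt_closure_singleton {a b : T} :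
    closure {b} < closure {a} ↔ a ∣ b ∧ ¬b ∣ a := by
  simp only [SetLike.lt_iff_le_and_exists, closure_le, Set.singleton_subset_iff, SetLike.mem_coe,
    mem_closure_singleton]
  exact and_congr_right fun _ =>
    ⟨fun ⟨_, hax, hbx⟩ hba => hbx (hba.trans hax), fun hba => ⟨a, dvd_rfl, hba⟩⟩

variable (T) in
def nonunitsIdeal : SemigroupIdeal T where
  carrier := nonunits T
  smul_mem' _ _ := mul_mem_nonunits_right

variable (T) in
def fixedByNonunit : SemigroupIdeal T where
  carrier := {x | ∃ m, ¬IsUnit m ∧ x * m = x}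
  smul_mem' := by
    rintro t x ⟨m, hm, hxm⟩
    exact ⟨m, hm, by rw [smul_eq_mul, mul_assoc, hxm]⟩

theorem mem_fixedByNonunit_of_not_mem (hwf : WellFounded fun a b : T => a ∣ b ∧ ¬b ∣ a)
    {N : Submonoid T} (hN : ∀ x, IsUnit x ∨ Irreducible x → x ∈ N) {x : T} (hx : x ∉ N) :
    x ∈ fixedByNonunit T := by
  induction x using hwf.induction with | _ x ih =>
  have hxu : ¬IsUnit x := fun h => hx (hN x (.inl h))
  obtain ⟨a, b, rfl, ha, hb⟩ : ∃ a b, x = a * b ∧ ¬IsUnit a ∧ ¬IsUnit b := by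
    have hxi : ¬Irreducible x := fun h => hx (hN x (.inr h))
    rw [irreducible_iff] at hxi
    push Not at hxi
    exact hxi hxu
  by_cases hxa : a * b ∣ a
  · obtain ⟨c, hc⟩ := hxa
    exact ⟨c * b, fun h => hb (isUnit_of_mul_isUnit_right h), by rw [← mul_assoc, ← hc]⟩
  by_cases hxb : a * b ∣ b
  · obtain ⟨c, hc⟩ := hxb
    exact ⟨c * a, fun h => ha (isUnit_of_mul_isUnit_right h), by rw [← mul_assoc, ← hc, mul_comm]⟩
  by_cases haN : a ∈ N
  · have hbN : b ∉ N := fun hbN => hx (mul_mem haN hbN)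
    obtain ⟨m, hm, hbm⟩ := ih b ⟨dvd_mul_left b a, hxb⟩ hbN
    exact ⟨m, hm, by rw [mul_assoc, hbm]⟩
  · obtain ⟨m, hm, ham⟩ := ih a ⟨dvd_mul_right a b, hxa⟩ haN
    exact ⟨m, hm, by rw [mul_right_comm, ham]⟩

theorem fg_of_wellFoundedGT_con [WellFoundedGT (Con T)] (I : SemigroupIdeal T) : I.FG := by
  classical
  rcases (I : Set T).eq_empty_or_nonempty with hI | ⟨a, ha⟩
  · exact fg_iff.2 ⟨∅, le_antisymm (fun x hx => (hI ▸ hx : x ∈ (∅ : Set T)).elim)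
      (closure_le.2 (by simp))⟩
  -- Nonempty generating sets only: `reesCon` cannot tell `∅` from a one-point ideal `{0}`.
  obtain ⟨_, ⟨s, hsI, hs, rfl⟩, hmax⟩ := wellFounded_gt.has_min
    {c | ∃ s : Finset T, (s : Set T) ⊆ I ∧ s.Nonempty ∧ c = reesCon (closure s)}
    ⟨reesCon (closure {a}), {a}, by simpa using ha, Finset.singleton_nonempty a, by simp⟩
  refine fg_iff.2 ⟨s, le_antisymm (fun x hx => ?_) (closure_le.2 hsI)⟩
  by_contra hxs
  refine hmax _ ⟨insert x s, by simpa [Set.insert_subset_iff] using ⟨hx, hsI⟩,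
    Finset.insert_nonempty x s, rfl⟩ (reesCon_lt_reesCon ?_ (hs.to_set.mono subset_closure))
  exact SetLike.lt_iff_le_and_exists.2 ⟨closure_mono (by simp), x, subset_closure (by simp), hxs⟩

end SemigroupIdeal

theorem wellFounded_strictDvd_of_wellFoundedGT_con {T : Type*} [CommMonoid T]
    [WellFoundedGT (Con T)] : WellFounded fun a b : T => a ∣ b ∧ ¬b ∣ a :=
  Subrelation.wf
    (fun {_ b} hab => SemigroupIdeal.reesCon_lt_reesCon
      (SemigroupIdeal.closure_singleton_lt_closure_singleton.2 hab)
      ⟨b, SemigroupIdeal.subset_closure rfl⟩)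
    (InvImage.wf (fun a => SemigroupIdeal.reesCon (SemigroupIdeal.closure {a})) wellFounded_gt)

namespace Subgroup

variable {T : Type*} [CommMonoid T]

def unitsCon (S : Subgroup Tˣ) : Con T where
  r x y := ∃ u ∈ S, x = y * u
  iseqv.refl _ := ⟨1, S.one_mem, by simp⟩
  iseqv.symm := by
    rintro _ y ⟨u, hu, rfl⟩
    exact ⟨u⁻¹, S.inv_mem hu, by simp [mul_assoc]⟩
  iseqv.trans := by
    rintro _ _ z ⟨u, hu, rfl⟩ ⟨v, hv, rfl⟩
    exact ⟨v * u, S.mul_mem hv hu, by simp [mul_assoc]⟩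
  mul' := by
    rintro _ x _ z ⟨u, hu, rfl⟩ ⟨v, hv, rfl⟩
    exact ⟨u * v, S.mul_mem hu hv, by push_cast; exact mul_mul_mul_comm x u z v⟩

def unitsConOrderEmbedding : Subgroup Tˣ ↪o Con T :=
  OrderEmbedding.ofMapLEIff unitsCon fun _ _ => by
    refine ⟨fun h u hu => ?_, fun h _ _ ⟨u, hu, hxy⟩ => ⟨u, h hu, hxy⟩⟩
    obtain ⟨v, hv, huv⟩ := h ⟨u, hu, (one_mul _).symm⟩
    rwa [Units.ext (huv.trans (one_mul _))]

end Subgroup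

theorem Group.fg_units_of_wellFoundedGT_con {T : Type*} [CommMonoid T] [WellFoundedGT (Con T)] :
    Group.FG Tˣ := by
  have : WellFoundedGT (Submodule ℤ (Additive Tˣ)) := OrderEmbedding.wellFoundedGT <|
    (Subgroup.toAddSubgroup.trans AddSubgroup.toIntSubmodule).symm.toOrderEmbedding.trans
      Subgroup.unitsConOrderEmbedding
  have : IsNoetherian ℤ (Additive Tˣ) := isNoetherian_iff'.2 this
  exact GroupFG.iff_add_fg.2 (Module.Finite.iff_addGroup_fg.1 inferInstance)

namespace Submonoid

theorem exists_fg_map_eq_top {M N : Type*} [Monoid M] [Monoid N] [Monoid.FG N]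
    (f : M →* N) (hf : Surjective f) : ∃ P : Submonoid M, P.FG ∧ P.map f = ⊤ := by
  classical
  obtain ⟨S, hS⟩ := Monoid.fg_def.1 ‹_›
  refine ⟨closure (S.image (surjInv hf)), ⟨_, rfl⟩, ?_⟩
  rw [MonoidHom.map_mclosure, Finset.coe_image, Set.image_image]
  simpa [surjInv_eq hf] using hS

variable {T : Type*} [CommMonoid T]

theorem exists_fg_forall_mul_eq_self (m : T) [Monoid.FG (Con.powers m).Quotient] :
    ∃ N : Submonoid T, N.FG ∧ ∀ x, x * m = x → x ∈ N := by
  obtain ⟨P, hP, hPtop⟩ := exists_fg_map_eq_top _ (Con.powers m).mk'_surjective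
  refine ⟨P ⊔ closure {m}, hP.sup ⟨{m}, by simp⟩, fun x hx => ?_⟩
  have hxP : (Con.powers m).mk' x ∈ P.map (Con.powers m).mk' := by
    rw [hPtop]; exact mem_top _
  obtain ⟨w, hw, hwx⟩ := mem_map.1 hxP
  obtain ⟨i, j, h⟩ : Con.powers m w x := (Con.powers m).eq.1 hwx
  have hpow : ∀ n : ℕ, x * m ^ n = x := fun n => by
    induction n with
    | zero => simp
    | succ n ih => rw [pow_succ, ← mul_assoc, ih, hx]
  rw [← hpow j, ← h]
  exact mul_mem (mem_sup_left hw) (pow_mem (mem_sup_right (subset_closure (Set.mem_singleton m))) i)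

variable [WellFoundedGT (Con T)]

theorem exists_fg_forall_isUnit_or_irreducible :
    ∃ N : Submonoid T, N.FG ∧ ∀ x, IsUnit x ∨ Irreducible x → x ∈ N := by
  obtain ⟨P, hP⟩ := SemigroupIdeal.fg_iff.1
    (SemigroupIdeal.fg_of_wellFoundedGT_con (SemigroupIdeal.nonunitsIdeal T))
  have := Group.fg_iff_monoid_fg.1 (Group.fg_units_of_wellFoundedGT_con (T := T))
  have hU : ∀ x : T, IsUnit x → x ∈ MonoidHom.mrange (Units.coeHom T) := fun _ ⟨u, hu⟩ => ⟨u, hu⟩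
  refine ⟨MonoidHom.mrange (Units.coeHom T) ⊔ closure P,
    ((Monoid.fg_iff_submonoid_fg _).1 inferInstance).sup ⟨P, rfl⟩, ?_⟩
  rintro x (hx | hx)
  · exact mem_sup_left (hU x hx)
  have hxP : x ∈ SemigroupIdeal.closure (P : Set T) := hP ▸ hx.not_isUnit
  obtain ⟨y, p, hp, rfl⟩ := SemigroupIdeal.mem_closure''.1 hxP
  have hpu : ¬IsUnit p :=
    (hP ▸ SemigroupIdeal.subset_closure hp : p ∈ SemigroupIdeal.nonunitsIdeal T)
  exact mul_mem (mem_sup_left (hU y ((hx.isUnit_or_isUnit rfl).resolve_right hpu)))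
    (mem_sup_right (subset_closure hp))

theorem exists_fg_forall_mem_fixedByNonunit
    (hq : ∀ d : Con T, d ≠ ⊥ → Monoid.FG d.Quotient) :
    ∃ N : Submonoid T, N.FG ∧ ∀ x ∈ SemigroupIdeal.fixedByNonunit T, x ∈ N := by
  obtain ⟨A, hA⟩ := SemigroupIdeal.fg_iff.1
    (SemigroupIdeal.fg_of_wellFoundedGT_con (SemigroupIdeal.fixedByNonunit T))
  have hgen : ∀ a ∈ A, ∃ N : Submonoid T, N.FG ∧ ∀ x, a ∣ x → x ∈ N := by
    intro a ha
    obtain ⟨m, hm, ham⟩ : a ∈ SemigroupIdeal.fixedByNonunit T :=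
      hA ▸ SemigroupIdeal.subset_closure ha
    have := hq _ (Con.powers_ne_bot fun h : m = 1 => hm (h ▸ isUnit_one))
    obtain ⟨N, hN, hxN⟩ := exists_fg_forall_mul_eq_self m
    exact ⟨N, hN, fun x ⟨t, ht⟩ => hxN x (by rw [ht, mul_right_comm, ham])⟩
  choose! N hN hxN using hgen
  refine ⟨⨆ a ∈ A, N a, FG.biSup_finset A N hN, fun x hx => ?_⟩
  have hxA : x ∈ SemigroupIdeal.closure (A : Set T) := hA ▸ hx
  obtain ⟨y, a, ha, rfl⟩ := SemigroupIdeal.mem_closure''.1 hxA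
  exact mem_iSup_of_mem a (mem_iSup_of_mem ha (hxN a ha _ (dvd_mul_left a y)))

end Submonoid

namespace Monoid

theorem fg_of_forall_ne_bot_fg {T : Type*} [CommMonoid T] [WellFoundedGT (Con T)]
    (hq : ∀ d : Con T, d ≠ ⊥ → Monoid.FG d.Quotient) : Monoid.FG T := by
  obtain ⟨N₁, hN₁, h₁⟩ := Submonoid.exists_fg_forall_isUnit_or_irreducible (T := T)
  obtain ⟨N₂, hN₂, h₂⟩ := Submonoid.exists_fg_forall_mem_fixedByNonunit hq
  have htop : N₁ ⊔ N₂ = ⊤ := (Submonoid.eq_top_iff' _).2 fun x => by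
    by_cases hx : x ∈ N₁
    · exact Submonoid.mem_sup_left hx
    · exact Submonoid.mem_sup_right (h₂ x (SemigroupIdeal.mem_fixedByNonunit_of_not_mem
        wellFounded_strictDvd_of_wellFoundedGT_con h₁ hx))
  exact ⟨htop ▸ hN₁.sup hN₂⟩

theorem fg_of_wellFoundedGT_con {M : Type*} [CommMonoid M] [WellFoundedGT (Con M)] :
    Monoid.FG M := by
  suffices h : ∀ c : Con M, Monoid.FG c.Quotient by
    have := h (Con.ker (MonoidHom.id M))
    let e := Con.quotientKerEquivOfSurjective (MonoidHom.id M) surjective_id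
    exact fg_of_surjective e.toMonoidHom e.surjective
  intro c
  induction c using WellFoundedGT.induction with | _ c ih =>
  have := Con.wellFoundedGT_of_surjective c.mk' c.mk'_surjective
  refine fg_of_forall_ne_bot_fg fun d hd => ?_
  have := ih _ (Con.lt_ker_comp_of_ne_bot hd)
  let e := Con.quotientKerEquivOfSurjective (d.mk'.comp c.mk')
    (d.mk'_surjective.comp c.mk'_surjective)
  exact fg_of_surjective e.toMonoidHom e.surjective

theorem fg_iff_wellFoundedGT_con {M : Type*} [CommMonoid M] :
    Monoid.FG M ↔ WellFoundedGT (Con M) :=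
  ⟨fun _ => Con.wellFoundedGT_of_fg, fun _ => fg_of_wellFoundedGT_con⟩

theorem fg_iff_exists_finset_ne_zero {A : Type*} [MonoidWithZero A] :
    Monoid.FG A ↔ ∃ X : Finset A, ∀ a : A, a ≠ 0 → a ∈ Submonoid.closure (X : Set A) := by
  classical
  refine ⟨fun ⟨X, hX⟩ => ⟨X, fun a _ => hX ▸ Submonoid.mem_top a⟩,
    fun ⟨X, hX⟩ => ⟨insert 0 X, (Submonoid.eq_top_iff' _).2 fun a => ?_⟩⟩
  rcases eq_or_ne a 0 with rfl | ha
  · exact Submonoid.subset_closure (by simp)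
  · exact Submonoid.closure_mono (by simp) (hX a ha)

end Monoid

/-- A commutative pointed monoid is finitely generated (every nonzero element is a finite,
possibly empty, product of elements of a fixed finite subset) if and only if its
congruences satisfy the ascending chain condition. -/
theorem monoid_fg_iff_acc_on_congruences {A : Type*} [CommMonoidWithZero A] :
    (∃ X : Finset A, ∀ a : A, a ≠ 0 → a ∈ Submonoid.closure (X : Set A)) ↔
    (∀ c : ℕ → Con A, Monotone c → ∃ N, ∀ m, N ≤ m → c m = c N) := by
  rw [← Monoid.fg_iff_exists_finset_ne_zero, Monoid.fg_iff_wellFoundedGT_con,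
    wellFoundedGT_iff_monotone_chain_condition]
  exact ⟨fun h c hc => (h ⟨c, hc⟩).imp fun _ hN m hm => (hN m hm).symm,
    fun h c => (h c c.monotone).imp fun _ hN m hm => (hN m hm).symm⟩
end

section
/- Let A be a finitely generated commutative pointed monoid and X an A-set. Then X satisfies the ascending chain condition on A-set congruences (every increasing sequence of congruences on X is eventually constant) if and only if X is noetherian, i.e. X satisfies the ascending chain condition on A-subsets. -/
/-- A congruence on an `A`-set `X`: an equivalence relation compatible with the
`A`-action. -/
def IsASetCong (A : Type*) {X : Type*} [CommMonoidWithZero A] [Zero X]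
    [MulActionWithZero A X] (r : X → X → Prop) : Prop :=
  Equivalence r ∧ ∀ (a : A) (x y : X), r x y → r (a • x) (a • y)

/-- An `A`-subset of an `A`-set `X`: a subset containing `0` and closed under the
`A`-action. -/
def IsASubset (A : Type*) {X : Type*} [CommMonoidWithZero A] [Zero X]
    [MulActionWithZero A X] (S : Set X) : Prop :=
  (0 : X) ∈ S ∧ ∀ a : A, ∀ x ∈ S, a • x ∈ S

/-!
`A`-subsets embed order-faithfully into congruences via Rees congruences `x = y ∨ x, y ∈ S`, since
`S` is the class of `0`. Conversely, a noetherian `A`-set is generated by finitely many elements,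
so `ℚ[X]` is a finitely generated module over `ℚ[A]`, which is noetherian because `A` is finitely
generated. A congruence `∼` is recovered from the kernel of `ℚ[X] → ℚ[X/∼]`, an `A`-invariant
subspace, as `x ∼ y ↔ [x] - [y] ∈ ker`; so congruences embed order-faithfully into the
`ℚ[A]`-submodules of `ℚ[X]`, which satisfy the ascending chain condition.
-/

theorem wellFoundedGT_subtype_iff {α : Type*} [PartialOrder α] (P : α → Prop) :
    WellFoundedGT {a // P a} ↔
      ∀ c : ℕ → α, (∀ n, P (c n)) → (∀ n, c n ≤ c (n + 1)) → ∃ N, ∀ m, N ≤ m → c m = c N := by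
  rw [wellFoundedGT_iff_monotone_chain_condition]
  refine ⟨fun h c hP hc => ?_, fun h c => ?_⟩
  · obtain ⟨N, hN⟩ := h ⟨fun n => ⟨c n, hP n⟩, monotone_nat_of_le_succ hc⟩
    exact ⟨N, fun m hm => congrArg Subtype.val (hN m hm).symm⟩
  · obtain ⟨N, hN⟩ := h (fun n => c n) (fun n => (c n).2) (fun n => c.monotone n.le_succ)
    exact ⟨N, fun m hm => Subtype.ext (hN m hm).symm⟩

section Rees

variable {A X : Type*} [CommMonoidWithZero A] [Zero X] [MulActionWithZero A X]

def reesCong (S : Set X) (x y : X) : Prop := x = y ∨ x ∈ S ∧ y ∈ S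

theorem isASetCong_reesCong {S : Set X} (hS : IsASubset A S) : IsASetCong A (reesCong S) := by
  refine ⟨⟨fun x => Or.inl rfl, fun h => h.imp Eq.symm And.symm, ?_⟩, ?_⟩
  · rintro x y z hxy (rfl | hyz)
    · exact hxy
    · rcases hxy with rfl | hxy
      exacts [Or.inr hyz, Or.inr ⟨hxy.1, hyz.2⟩]
  · rintro a x y (rfl | ⟨hx, hy⟩)
    exacts [Or.inl rfl, Or.inr ⟨hS.2 a x hx, hS.2 a y hy⟩]

theorem reesCong_zero_right_iff {S : Set X} (h0 : (0 : X) ∈ S) (x : X) :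
    reesCong S x 0 ↔ x ∈ S := by
  refine ⟨?_, fun hx => Or.inr ⟨hx, h0⟩⟩
  rintro (rfl | ⟨hx, -⟩)
  exacts [h0, hx]

variable (A X) in
def reesCongEmbedding : {S : Set X // IsASubset A S} ↪o {r : X → X → Prop // IsASetCong A r} :=
  OrderEmbedding.ofMapLEIff (fun S => ⟨reesCong S.1, isASetCong_reesCong S.2⟩) fun S T => by
    refine ⟨fun h x hx => ?_, fun h x y => Or.imp_right fun hxy => ⟨h hxy.1, h hxy.2⟩⟩
    exact (reesCong_zero_right_iff T.2.1 x).1 (h x 0 ((reesCong_zero_right_iff S.2.1 x).2 hx))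

end Rees

section QuotKer

open MonoidAlgebra Representation Pointwise

variable (k : Type*) {A X : Type*} [CommRing k] [Monoid A] [MulAction A X]

noncomputable def quotKer (r : X → X → Prop) : Submodule k k[X] :=
  LinearMap.ker (mapDomainLinearMap k k (Quot.mk r))

variable {k}

theorem single_sub_single_mem_quotKer_iff [Nontrivial k] {r : X → X → Prop} {x y : X} :
    single x (1 : k) - single y 1 ∈ quotKer k r ↔ Relation.EqvGen r x y := by
  rw [quotKer, LinearMap.mem_ker, map_sub, mapDomainLinearMap_single, mapDomainLinearMap_single,
    sub_eq_zero, single_left_inj one_ne_zero, Quot.eq]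

theorem quotKer_mono {r s : X → X → Prop} (h : ∀ x y, r x y → s x y) :
    quotKer k r ≤ quotKer k s := by
  rw [quotKer, quotKer, ← Quot.factor_mk_eq r s h, mapDomainLinearMap_comp]
  exact LinearMap.ker_le_ker_comp _ _

theorem quotKer_mem_invtSubmodule {r : X → X → Prop}
    (hr : ∀ (a : A) (x y : X), r x y → r (a • x) (a • y)) :
    quotKer k r ∈ (ofMulAction k A X).invtSubmodule := by
  refine (ofMulAction k A X).mem_invtSubmodule.2 fun a v hv => ?_
  have hcomm : Quot.mk r ∘ (a • ·) = Quot.map (a • ·) (hr a) ∘ Quot.mk r := rfl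
  change mapDomainLinearMap k k (Quot.mk r) (mapDomainLinearMap k k (a • ·) v) = 0
  rw [← LinearMap.comp_apply, ← mapDomainLinearMap_comp, hcomm, mapDomainLinearMap_comp,
    LinearMap.comp_apply, LinearMap.mem_ker.1 hv, map_zero]

theorem finite_asModule_ofMulAction {F : Finset X}
    (hF : (Set.univ : Set A) • (F : Set X) = Set.univ) :
    Module.Finite k[A] (ofMulAction k A X).asModule := by
  classical
  set ρ := ofMulAction k A X
  refine ⟨⟨F.image fun f => ρ.asModuleEquiv.symm (single f 1), ?_⟩⟩
  refine Submodule.eq_top_iff'.2 fun v => ?_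
  rw [← ρ.asModuleEquiv.symm_apply_apply v]
  induction ρ.asModuleEquiv v using MonoidAlgebra.induction_linear with
  | zero => rw [map_zero]; exact zero_mem _
  | add v w hv hw => rw [map_add]; exact add_mem hv hw
  | single x q =>
    obtain ⟨a, -, f, hf, rfl⟩ := Set.eq_univ_iff_forall.1 hF x
    have hsmul : ρ.asModuleEquiv.symm (single (a • f) q) =
        single a q • ρ.asModuleEquiv.symm (single f 1) := by
      rw [LinearEquiv.symm_apply_eq, asModuleEquiv_map_smul, LinearEquiv.apply_symm_apply,
        asAlgebraHom_single, LinearMap.smul_apply, ofMulAction_single, smul_single, smul_eq_mul,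
        mul_one]
    rw [hsmul]
    exact Submodule.smul_mem _ _ <|
      Submodule.subset_span (Finset.mem_coe.2 (Finset.mem_image_of_mem _ hf))

theorem wellFoundedGT_invtSubmodule_ofMulAction [IsNoetherianRing k[A]] {F : Finset X}
    (hF : (Set.univ : Set A) • (F : Set X) = Set.univ) :
    WellFoundedGT (ofMulAction k A X).invtSubmodule :=
  have := finite_asModule_ofMulAction (k := k) hF
  (ofMulAction k A X).mapSubmodule.strictMono.wellFoundedGT

end QuotKer

section Congruences

open MonoidAlgebra Representation Pointwise

variable (k : Type*) [CommRing k] [Nontrivial k]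
variable {A X : Type*} [CommMonoidWithZero A] [Zero X] [MulActionWithZero A X]

variable (A X) in
noncomputable def quotKerEmbedding :
    {r : X → X → Prop // IsASetCong A r} ↪o (ofMulAction k A X).invtSubmodule :=
  OrderEmbedding.ofMapLEIff (fun r => ⟨quotKer k r.1, quotKer_mem_invtSubmodule r.2.2⟩)
    fun r s => by
      refine ⟨fun h x y hxy => ?_, fun h => quotKer_mono h⟩
      have hr : single x (1 : k) - single y 1 ∈ quotKer k r.1 :=
        single_sub_single_mem_quotKer_iff.2 (Relation.EqvGen.rel _ _ hxy)
      exact s.2.1.eqvGen_iff.1 (single_sub_single_mem_quotKer_iff.1 (h hr))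

theorem isASubset_univ_smul {F : Set X} (hF : F.Nonempty) :
    IsASubset A ((Set.univ : Set A) • F) := by
  obtain ⟨f, hf⟩ := hF
  refine ⟨⟨0, trivial, f, hf, zero_smul A f⟩, ?_⟩
  rintro a _ ⟨b, -, f, hf, rfl⟩
  exact ⟨a * b, trivial, f, hf, mul_smul a b f⟩

theorem exists_finset_univ_smul_eq_univ [WellFoundedGT {S : Set X // IsASubset A S}] :
    ∃ F : Finset X, (Set.univ : Set A) • (F : Set X) = Set.univ := by
  classical
  let gen (F : Finset X) : {S : Set X // IsASubset A S} :=
    ⟨Set.univ • ((insert 0 F : Finset X) : Set X), isASubset_univ_smul ⟨0, by simp⟩⟩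
  obtain ⟨-, ⟨F, rfl⟩, hmax⟩ := wellFounded_gt.has_min (Set.range gen) ⟨gen ∅, ∅, rfl⟩
  refine ⟨insert 0 F, Set.eq_univ_of_forall fun x => ?_⟩
  have hle : gen F ≤ gen (insert x F) :=
    Set.smul_subset_smul_left <|
      Finset.coe_subset.2 (Finset.insert_subset_insert 0 (Finset.subset_insert x F))
  have heq : gen F = gen (insert x F) :=
    hle.eq_of_not_lt (hmax _ ⟨_, rfl⟩)
  rw [show (Set.univ : Set A) • _ = (gen F).1 from rfl, heq]
  exact ⟨1, trivial, x, by simp, one_smul A x⟩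

end Congruences

theorem Monoid.fg_of_forall_ne_zero_mem_closure {A : Type*} [MonoidWithZero A] (X₀ : Finset A)
    (h : ∀ a : A, a ≠ 0 → a ∈ Submonoid.closure (X₀ : Set A)) : Monoid.FG A := by
  classical
  refine ⟨⟨insert 0 X₀, eq_top_iff.2 fun a _ => ?_⟩⟩
  by_cases ha : a = 0
  · exact Submonoid.subset_closure (by simp [ha])
  · exact Submonoid.closure_mono (by simp) (h a ha)

theorem wellFoundedGT_isASetCong {A X : Type*} [CommMonoidWithZero A] [Monoid.FG A] [Zero X]
    [MulActionWithZero A X] [WellFoundedGT {S : Set X // IsASubset A S}] :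
    WellFoundedGT {r : X → X → Prop // IsASetCong A r} := by
  have : IsNoetherianRing (MonoidAlgebra ℚ A) := Algebra.FiniteType.isNoetherianRing ℚ _
  obtain ⟨F, hF⟩ := exists_finset_univ_smul_eq_univ (A := A) (X := X)
  have := wellFoundedGT_invtSubmodule_ofMulAction (k := ℚ) hF
  exact (quotKerEmbedding ℚ A X).strictMono.wellFoundedGT

/-- For a finitely generated commutative pointed monoid `A` and an `A`-set `X`,
`X` has the ascending chain condition on `A`-set congruences if and only if `X` is
noetherian, i.e. has the ascending chain condition on `A`-subsets. -/
theorem acc_congruences_iff_noetherian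
    {A : Type*} [CommMonoidWithZero A]
    (hfg : ∃ X₀ : Finset A, ∀ a : A, a ≠ 0 → a ∈ Submonoid.closure (X₀ : Set A))
    {X : Type*} [Zero X] [MulActionWithZero A X] :
    (∀ c : ℕ → (X → X → Prop), (∀ n, IsASetCong A (c n)) →
        (∀ n, ∀ x y : X, c n x y → c (n + 1) x y) →
        ∃ N, ∀ m, N ≤ m → c m = c N) ↔
    (∀ c : ℕ → Set X, (∀ n, IsASubset A (c n)) → (∀ n, c n ⊆ c (n + 1)) →
        ∃ N, ∀ m, N ≤ m → c m = c N) := by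
  obtain ⟨X₀, hX₀⟩ := hfg
  have := Monoid.fg_of_forall_ne_zero_mem_closure X₀ hX₀
  refine (wellFoundedGT_subtype_iff (IsASetCong A)).symm.trans <|
    Iff.trans ?_ (wellFoundedGT_subtype_iff (IsASubset A))
  exact ⟨fun _ => (reesCongEmbedding A X).strictMono.wellFoundedGT,
    fun _ => wellFoundedGT_isASetCong⟩
end

section
/- If k is a noetherian commutative ring and A is a finitely generated commutative pointed monoid, then the contracted monoid algebra k[A], i.e. the quotient of the monoid algebra MonoidAlgebra k A by the ideal generated by the basis element single 0 1 corresponding to the basepoint 0 ∈ A, is a noetherian ring. -/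
/-- If `k` is a noetherian commutative ring and `A` a finitely generated commutative
pointed monoid, then the contracted monoid algebra `k[A]`, i.e. the quotient of the monoid
algebra `MonoidAlgebra k A` by the ideal generated by the basis element `single 0 1`
corresponding to the basepoint of `A`, is a noetherian ring. -/
theorem contracted_monoid_algebra_noetherian
    {k : Type*} [CommRing k] [IsNoetherianRing k]
    {A : Type*} [CommMonoidWithZero A]
    (hfg : ∃ X : Finset A, ∀ a : A, a ≠ 0 → a ∈ Submonoid.closure (X : Set A)) :
    IsNoetherianRing
      (MonoidAlgebra k A ⧸ Ideal.span {MonoidAlgebra.single (0 : A) (1 : k)}) := by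
  classical
  obtain ⟨X, hX⟩ := hfg
  have hFG : Monoid.FG A := by
    refine ⟨⟨insert 0 X, ?_⟩⟩
    rw [eq_top_iff]
    intro a _
    by_cases ha : a = 0
    · subst ha
      exact Submonoid.subset_closure (by simp)
    · exact Submonoid.closure_mono (by simp [Finset.coe_insert, Set.subset_insert]) (hX a ha)
  have : Algebra.FiniteType k (MonoidAlgebra k A) := inferInstance
  have hN : IsNoetherianRing (MonoidAlgebra k A) :=
    Algebra.FiniteType.isNoetherianRing k (MonoidAlgebra k A)
  exact isNoetherianRing_of_surjective _ _ (Ideal.Quotient.mk _) Ideal.Quotient.mk_surjective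
end

section
/- Let A be a commutative pointed monoid with unit group A^×, and let X be an A-set which is finitely generated as an A/m-set, i.e. there is a finite subset F ⊆ X such that every element of X is either 0 or of the form u·f with u ∈ A^× and f ∈ F. Then X is both artinian and noetherian: every descending chain and every ascending chain of A-subsets of X stabilizes. -/
private lemma asubset_ext {A : Type*} [CommMonoidWithZero A] {X : Type*} [Zero X]
    [MulActionWithZero A X] (F : Finset X)
    (hF : ∀ x : X, x = 0 ∨ ∃ u : Aˣ, ∃ f ∈ F, x = (u : A) • f)
    {S T : Set X} (hS : IsASubset A S) (hT : IsASubset A T)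
    (h : ∀ f ∈ F, (f ∈ S ↔ f ∈ T)) : S = T := by
  have key : ∀ (S T : Set X), IsASubset A S → IsASubset A T →
      (∀ f ∈ F, f ∈ S → f ∈ T) → S ⊆ T := by
    intro S T hS hT h x hx
    rcases hF x with rfl | ⟨u, f, hf, rfl⟩
    · exact hT.1
    · have hfS : f ∈ S := by
        have := hS.2 ((u⁻¹ : Aˣ) : A) _ hx
        rwa [smul_smul, Units.inv_mul, one_smul] at this
      exact hT.2 _ _ (h f hf hfS)
  exact le_antisymm (key S T hS hT fun f hf => (h f hf).1)
    (key T S hT hS fun f hf => (h f hf).2)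

private lemma mono_nat_stab (f : ℕ → ℕ) (hf : Monotone f) (B : ℕ) (hB : ∀ n, f n ≤ B) :
    ∃ N, ∀ m, N ≤ m → f m = f N := by
  have hne : (Set.range f).Nonempty := ⟨f 0, 0, rfl⟩
  have hbdd : BddAbove (Set.range f) := ⟨B, by rintro _ ⟨n, rfl⟩; exact hB n⟩
  obtain ⟨N, hN⟩ := Nat.sSup_mem hne hbdd
  exact ⟨N, fun m hm => le_antisymm (hN ▸ le_csSup hbdd ⟨m, rfl⟩) (hf hm)⟩

private lemma anti_nat_stab (f : ℕ → ℕ) (hf : Antitone f) :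
    ∃ N, ∀ m, N ≤ m → f m = f N := by
  obtain ⟨N, hN⟩ : sInf (Set.range f) ∈ Set.range f :=
    Nat.sInf_mem ⟨f 0, 0, rfl⟩
  exact ⟨N, fun m hm => le_antisymm (hf hm) (hN ▸ Nat.sInf_le ⟨m, rfl⟩)⟩

/-- If an `A`-set `X` is finitely generated as an `A/m`-set — there is a finite `F ⊆ X`
such that every element of `X` is `0` or of the form `u • f` with `u` a unit of `A` and
`f ∈ F` — then `X` is artinian and noetherian: every descending and every ascending chain
of `A`-subsets of `X` stabilizes. -/
theorem fg_over_units_artinian_and_noetherian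
    {A : Type*} [CommMonoidWithZero A] {X : Type*} [Zero X] [MulActionWithZero A X]
    (F : Finset X) (hF : ∀ x : X, x = 0 ∨ ∃ u : Aˣ, ∃ f ∈ F, x = (u : A) • f) :
    (∀ c : ℕ → Set X, (∀ n, IsASubset A (c n)) → (∀ n, c (n + 1) ⊆ c n) →
        ∃ N, ∀ m, N ≤ m → c m = c N) ∧
    (∀ c : ℕ → Set X, (∀ n, IsASubset A (c n)) → (∀ n, c n ⊆ c (n + 1)) →
        ∃ N, ∀ m, N ≤ m → c m = c N) := by
  classical
  constructor
  · intro c hc hdesc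
    set g : ℕ → Finset X := fun n => F.filter (· ∈ c n) with hg
    have hanti : Antitone g := antitone_nat_of_succ_le fun n x hx => by
      simp only [hg, Finset.mem_filter] at hx ⊢
      exact ⟨hx.1, hdesc n hx.2⟩
    obtain ⟨N, hN⟩ := anti_nat_stab (fun n => (g n).card)
      (fun a b hab => Finset.card_le_card (hanti hab))
    refine ⟨N, fun m hm => ?_⟩
    have hgm : g m = g N :=
      Finset.eq_of_subset_of_card_le (hanti hm) (hN m hm).ge
    refine asubset_ext F hF (hc m) (hc N) fun f hf => ?_
    constructor
    · intro h
      have : f ∈ g m := Finset.mem_filter.mpr ⟨hf, h⟩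
      exact (Finset.mem_filter.mp (hgm ▸ this)).2
    · intro h
      have : f ∈ g N := Finset.mem_filter.mpr ⟨hf, h⟩
      exact (Finset.mem_filter.mp (hgm ▸ this : f ∈ g m)).2
  · intro c hc hasc
    set g : ℕ → Finset X := fun n => F.filter (· ∈ c n) with hg
    have hmono : Monotone g := monotone_nat_of_le_succ fun n x hx => by
      simp only [hg, Finset.mem_filter] at hx ⊢
      exact ⟨hx.1, hasc n hx.2⟩
    obtain ⟨N, hN⟩ := mono_nat_stab (fun n => (g n).card)
      (fun a b hab => Finset.card_le_card (hmono hab)) F.card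
      (fun n => Finset.card_le_card (Finset.filter_subset _ _))
    refine ⟨N, fun m hm => ?_⟩
    have hgm : g m = g N :=
      (Finset.eq_of_subset_of_card_le (hmono hm) (hN m hm).le).symm
    refine asubset_ext F hF (hc m) (hc N) fun f hf => ?_
    constructor
    · intro h
      have : f ∈ g m := Finset.mem_filter.mpr ⟨hf, h⟩
      exact (Finset.mem_filter.mp (hgm ▸ this)).2
    · intro h
      have : f ∈ g N := Finset.mem_filter.mpr ⟨hf, h⟩
      exact (Finset.mem_filter.mp (hgm ▸ this : f ∈ g m)).2
end

section
/- Let A be a commutative pointed monoid with unit group A^× and maximal ideal m = A ∖ A^×. Suppose (i) m is finitely generated as an ideal (there is a finite Y ⊆ m such that every element of m is of the form a·y, a ∈ A, y ∈ Y), (ii) mⁿ = m^{n+1} for some n > 0, where m^k denotes the set of products of k elements of m, and (iii) mⁿ is finitely generated as an A/m-set, i.e. there is a finite F ⊆ mⁿ such that every element of mⁿ is either 0 or of the form u·f with u ∈ A^×, f ∈ F. Then A is artinian: every descending chain of ideals of A stabilizes. -/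
/-- The `k`-th power of a subset `I` of a commutative pointed monoid:
the set of all products of `k` elements of `I`. -/
def setPowM {A : Type*} [CommMonoidWithZero A] (I : Set A) (k : ℕ) : Set A :=
  {x : A | ∃ l : List A, l.length = k ∧ (∀ a ∈ l, a ∈ I) ∧ l.prod = x}

open Pointwise

section Monoid

variable {M : Type*} [Monoid M]

def MeetsEveryUnitOrbit (S : Set M) : Prop :=
  ∀ x : M, ∃ u : Mˣ, ∃ s ∈ S, x = u * s

theorem Set.Finite.pow {Y : Set M} (hY : Y.Finite) (k : ℕ) : (Y ^ k).Finite := by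
  induction k with
  | zero => simp
  | succ k ih => rw [pow_succ]; exact ih.mul hY

theorem units_mul_or_mul_pow_of_generates {Y : Set M}
    (hY : ∀ x ∈ nonunits M, ∃ a : M, ∃ y ∈ Y, x = a * y) (x : M) (k : ℕ) :
    (∃ u : Mˣ, ∃ i < k, ∃ p ∈ Y ^ i, x = u * p) ∨ ∃ a : M, ∃ p ∈ Y ^ k, x = a * p := by
  induction k with
  | zero => exact .inr ⟨x, 1, by simp, (mul_one x).symm⟩
  | succ k ih =>
    rcases ih with ⟨u, i, hi, p, hp, hx⟩ | ⟨a, p, hp, rfl⟩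
    · exact .inl ⟨u, i, by omega, p, hp, hx⟩
    · by_cases ha : IsUnit a
      · exact .inl ⟨ha.unit, k, k.lt_succ_self, p, hp, rfl⟩
      · obtain ⟨b, y, hy, rfl⟩ := hY a ha
        refine .inr ⟨b, y * p, ?_, mul_assoc b y p⟩
        rw [pow_succ']
        exact Set.mul_mem_mul hy hp

end Monoid

theorem mul_mem_pow_of_mul_mem {M : Type*} [CommMonoid M] {I : Set M}
    (hI : ∀ a x : M, x ∈ I → a * x ∈ I) {k : ℕ} (hk : k ≠ 0) (a : M) {x : M} (hx : x ∈ I ^ k) :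
    a * x ∈ I ^ k := by
  obtain ⟨k, rfl⟩ := Nat.exists_eq_succ_of_ne_zero hk
  obtain ⟨p, hp, y, hy, rfl⟩ := (pow_succ I k ▸ hx :)
  rw [pow_succ, mul_left_comm]
  exact Set.mul_mem_mul hp (hI a y hy)

section PointedMonoid

variable {A : Type*} [CommMonoidWithZero A]

theorem setPowM_zero (I : Set A) : setPowM I 0 = {1} := by
  ext x
  simp [setPowM, eq_comm]

theorem setPowM_succ (I : Set A) (k : ℕ) : setPowM I (k + 1) = I * setPowM I k := by
  ext x
  constructor
  · rintro ⟨_ | ⟨y, l⟩, hlen, hmem, rfl⟩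
    · simp at hlen
    · simp only [List.length_cons, add_left_inj, List.mem_cons, forall_eq_or_imp] at hlen hmem
      exact Set.mul_mem_mul hmem.1 ⟨l, hlen, hmem.2, rfl⟩
  · rintro ⟨y, hy, _, ⟨l, hlen, hmem, rfl⟩, rfl⟩
    exact ⟨y :: l, by simp [hlen], by simpa [hy] using hmem, List.prod_cons⟩

theorem setPowM_eq_pow (I : Set A) (k : ℕ) : setPowM I k = I ^ k := by
  induction k with
  | zero => rw [setPowM_zero, pow_zero, Set.singleton_one]
  | succ k ih => rw [setPowM_succ, ih, pow_succ']

theorem exists_finite_meetsEveryUnitOrbit {Y F : Set A} (hYf : Y.Finite) (hYm : Y ⊆ nonunits A)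
    (hY : ∀ x ∈ nonunits A, ∃ a : A, ∃ y ∈ Y, x = a * y) {n : ℕ} (hn : n ≠ 0) (hFf : F.Finite)
    (hF : ∀ x ∈ nonunits A ^ n, x = 0 ∨ ∃ u : Aˣ, ∃ f ∈ F, x = u * f) :
    ∃ S : Set A, S.Finite ∧ MeetsEveryUnitOrbit S := by
  refine ⟨insert 0 (F ∪ ⋃ i < n, Y ^ i), ?_, fun x => ?_⟩
  · exact (hFf.union (Set.finite_lt_nat n |>.biUnion fun i _ => hYf.pow i)).insert 0
  rcases units_mul_or_mul_pow_of_generates hY x n with ⟨u, i, hi, p, hp, hx⟩ | ⟨a, p, hp, rfl⟩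
  · exact ⟨u, p, .inr (.inr (Set.mem_biUnion hi hp)), hx⟩
  have hmn : a * p ∈ nonunits A ^ n :=
    mul_mem_pow_of_mul_mem (fun _ _ => mul_mem_nonunits_right) hn a (Set.pow_subset_pow_left hYm hp)
  rcases hF _ hmn with h0 | ⟨u, f, hf, hx⟩
  · exact ⟨1, 0, .inl rfl, by simp [h0]⟩
  · exact ⟨u, f, .inr (.inl hf), hx⟩

theorem IsMIdeal.subset_of_forall_mem_reps {S I J : Set A} (hS : MeetsEveryUnitOrbit S)
    (hI : IsMIdeal I) (hJ : IsMIdeal J) (hIJ : ∀ s ∈ S, s ∈ I → s ∈ J) : I ⊆ J := by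
  intro x hx
  obtain ⟨u, s, hs, rfl⟩ := hS x
  have hsI : s ∈ I := by simpa using hI.2 (↑u⁻¹) _ hx
  exact hJ.2 u s (hIJ s hs hsI)

theorem MeetsEveryUnitOrbit.antitone_chain_stabilizes {S : Set A} (hS : MeetsEveryUnitOrbit S)
    (hSf : S.Finite) {c : ℕ → Set A} (hc : ∀ k, IsMIdeal (c k)) (hanti : Antitone c) :
    ∃ N, ∀ j, N ≤ j → c j = c N := by
  have := hSf.to_subtype
  let trace : ℕ → Set S := fun k => (↑) ⁻¹' c k
  obtain ⟨N, hN⟩ := WellFoundedLT.antitone_chain_condition (f := trace)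
    fun i j hij => Set.preimage_mono (hanti hij)
  refine ⟨N, fun j hj => (hanti hj).antisymm ?_⟩
  refine IsMIdeal.subset_of_forall_mem_reps hS (hc N) (hc j) fun s hs hsN => ?_
  exact (hN j hj ▸ hsN : (⟨s, hs⟩ : S) ∈ trace j)

end PointedMonoid

theorem artinian_of_maximal_ideal_conditions_general
    {A : Type*} [CommMonoidWithZero A]
    (m : Set A) (hm : m = {a : A | ¬ IsUnit a})
    (hfg : ∃ Y : Finset A, (Y : Set A) ⊆ m ∧ ∀ x ∈ m, ∃ a : A, ∃ y ∈ Y, x = a * y)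
    (n : ℕ) (hn : 0 < n)
    (hfgset : ∃ F : Finset A, (F : Set A) ⊆ setPowM m n ∧
      ∀ x ∈ setPowM m n, x = 0 ∨ ∃ u : Aˣ, ∃ f ∈ F, x = (u : A) * f) :
    ∀ c : ℕ → Set A, (∀ k, IsMIdeal (c k)) → (∀ k, c (k + 1) ⊆ c k) →
      ∃ N, ∀ j, N ≤ j → c j = c N := by
  intro c hc hdesc
  obtain ⟨Y, hYm, hY⟩ := hfg
  obtain ⟨F, -, hF⟩ := hfgset
  subst hm
  rw [setPowM_eq_pow] at hF
  obtain ⟨S, hSf, hS⟩ :=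
    exists_finite_meetsEveryUnitOrbit Y.finite_toSet hYm hY hn.ne' F.finite_toSet hF
  exact hS.antitone_chain_stabilizes hSf hc (antitone_nat_of_succ_le hdesc)

/-- Let `A` be a commutative pointed monoid with maximal ideal `m = A ∖ A^×`.  If
(i) `m` is finitely generated as an ideal, (ii) `mⁿ = m^(n+1)` for some `n > 0`, and
(iii) `mⁿ` is finitely generated as an `A/m`-set, then `A` is artinian: every descending
chain of ideals of `A` stabilizes. -/
theorem artinian_of_maximal_ideal_conditions
    {A : Type*} [CommMonoidWithZero A]
    (m : Set A) (hm : m = {a : A | ¬ IsUnit a})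
    (hfg : ∃ Y : Finset A, (Y : Set A) ⊆ m ∧ ∀ x ∈ m, ∃ a : A, ∃ y ∈ Y, x = a * y)
    (n : ℕ) (hn : 0 < n)
    (hstab : setPowM m n = setPowM m (n + 1))
    (hfgset : ∃ F : Finset A, (F : Set A) ⊆ setPowM m n ∧
      ∀ x ∈ setPowM m n, x = 0 ∨ ∃ u : Aˣ, ∃ f ∈ F, x = (u : A) * f) :
    ∀ c : ℕ → Set A, (∀ k, IsMIdeal (c k)) → (∀ k, c (k + 1) ⊆ c k) →
      ∃ N, ∀ j, N ≤ j → c j = c N :=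
  artinian_of_maximal_ideal_conditions_general m hm hfg n hn hfgset
end

section
/- A noetherian commutative pointed monoid of Krull dimension zero is artinian: if A is a commutative pointed monoid in which every ascending chain of ideals stabilizes and there is no chain p₀ ⊊ p₁ of prime ideals of A (equivalently, the maximal ideal m = A ∖ A^× is the only prime ideal of A), then every descending chain of ideals of A stabilizes. -/
namespace ZDNA

variable {A : Type*} [CommMonoidWithZero A]

/-- principal ideal -/
def P (y : A) : Set A := {z | ∃ b, z = b * y}

lemma P_ideal (y : A) : IsMIdeal (P y) :=
  ⟨⟨0, (zero_mul y).symm⟩, by rintro a x ⟨b, rfl⟩; exact ⟨a * b, (mul_assoc a b y).symm⟩⟩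

lemma mem_P (y : A) : y ∈ P y := ⟨1, (one_mul y).symm⟩

lemma exists_maximal (hN : MonNoetherian A)
    (S : Set (Set A)) (hS : ∀ I ∈ S, IsMIdeal I) (hne : ∃ I, I ∈ S) :
    ∃ p ∈ S, ∀ J ∈ S, p ⊆ J → J = p := by
  by_contra hcon
  push_neg at hcon
  choose f hfS hfsub hfne using hcon
  obtain ⟨I₀, hI₀⟩ := hne
  let g : ℕ → {I : Set A // I ∈ S} := fun n =>
    Nat.rec ⟨I₀, hI₀⟩ (fun _ ih => ⟨f ih.1 ih.2, hfS ih.1 ih.2⟩) n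
  obtain ⟨N, hsN⟩ := hN (fun n => (g n).1) (fun n => hS _ (g n).2)
    (fun n => hfsub (g n).1 (g n).2)
  exact hfne (g N).1 (g N).2 (hsN (N + 1) (Nat.le_succ N))

lemma nonunits_prime (h0 : ¬ IsUnit (0 : A)) : IsMPrime {z : A | ¬ IsUnit z} := by
  refine ⟨⟨h0, fun a x hx hu => hx (isUnit_of_mul_isUnit_right hu)⟩, ?_, ?_⟩
  · intro h
    have : (1 : A) ∈ {z : A | ¬ IsUnit z} := h ▸ Set.mem_univ 1
    exact this isUnit_one
  · intro a b hab
    by_contra h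
    push_neg at h
    obtain ⟨ha, hb⟩ := h
    simp only [Set.mem_setOf_eq, not_not] at ha hb
    exact hab (ha.mul hb)

lemma nonunit_nilpotent (hN : MonNoetherian A)
    (hdim : ∀ p q : Set A, IsMPrime p → IsMPrime q → ¬ p ⊂ q)
    (h0 : ¬ IsUnit (0 : A)) {a : A} (ha : ¬ IsUnit a) :
    ∃ e, 0 < e ∧ a ^ e = 0 := by
  by_contra hcon
  push_neg at hcon
  set S : Set (Set A) := {I | IsMIdeal I ∧ ∀ e, 0 < e → a ^ e ∉ I} with hSdef
  have h01 : ({0} : Set A) ∈ S := by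
    refine ⟨⟨rfl, ?_⟩, ?_⟩
    · rintro b x rfl; simp
    · intro e he hmem
      exact hcon e he hmem
  obtain ⟨p, ⟨hpI, hpa⟩, hmax⟩ := exists_maximal hN S (fun I hI => hI.1) ⟨{0}, h01⟩
  -- for x ∉ p, some power of a is a multiple of x
  have hx : ∀ x : A, x ∉ p → ∃ e b, 0 < e ∧ a ^ e = b * x := by
    intro x hxp
    have hJ : IsMIdeal (p ∪ P x) := by
      refine ⟨Or.inl hpI.1, ?_⟩
      rintro b y (hy | ⟨d, rfl⟩)
      · exact Or.inl (hpI.2 b y hy)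
      · exact Or.inr ⟨b * d, (mul_assoc b d x).symm⟩
    have hJS : p ∪ P x ∉ S := by
      intro hmem
      have := hmax _ hmem Set.subset_union_left
      exact hxp (this ▸ Or.inr (mem_P x))
    have : ∃ e, 0 < e ∧ a ^ e ∈ p ∪ P x := by
      by_contra hc
      push_neg at hc
      exact hJS ⟨hJ, fun e he hmem => hc e he hmem⟩
    obtain ⟨e, he, (hmem | ⟨b, hb⟩)⟩ := this
    · exact absurd hmem (hpa e he)
    · exact ⟨e, b, he, hb⟩
  have hpprime : IsMPrime p := by
    refine ⟨hpI, ?_, ?_⟩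
    · intro h
      exact hpa 1 one_pos (by rw [pow_one]; exact h ▸ Set.mem_univ a)
    · intro x y hxy
      by_contra hc
      push_neg at hc
      obtain ⟨e₁, b₁, he₁, hb₁⟩ := hx x hc.1
      obtain ⟨e₂, b₂, he₂, hb₂⟩ := hx y hc.2
      refine hpa (e₁ + e₂) (by omega) ?_
      have : a ^ (e₁ + e₂) = (b₁ * b₂) * (x * y) := by
        rw [pow_add, hb₁, hb₂, mul_mul_mul_comm]
      rw [this]
      exact hpI.2 _ _ hxy
  -- p ⊆ nonunits, strictly
  have hsub : p ⊆ {z : A | ¬ IsUnit z} := by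
    intro z hz hu
    obtain ⟨u, rfl⟩ := hu
    have : p = Set.univ := by
      ext w
      refine ⟨fun _ => trivial, fun _ => ?_⟩
      have : w = (w * ↑u⁻¹) * ↑u := by
        rw [mul_assoc, Units.inv_mul, mul_one]
      rw [this]
      exact hpI.2 _ _ hz
    exact hpprime.2.1 this
  have hne : p ≠ {z : A | ¬ IsUnit z} := by
    intro h
    exact hpa 1 one_pos (by rw [pow_one, h]; exact ha)
  exact hdim p _ hpprime (nonunits_prime h0) (HasSubset.Subset.ssubset_of_ne hsub hne)

/-- the nonunits are a finite union of principal ideals (plus 0) -/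
lemma nonunits_fg (hN : MonNoetherian A) (h0 : ¬ IsUnit (0 : A)) :
    ∃ F : Finset A, (∀ x ∈ F, ¬ IsUnit x) ∧
      ∀ c : A, ¬ IsUnit c → c = 0 ∨ ∃ x ∈ F, ∃ b, c = b * x := by
  classical
  set FI : Finset A → Set A := fun F => {0} ∪ ⋃ x ∈ F, P x with hFIdef
  have hFI_ideal : ∀ F : Finset A, IsMIdeal (FI F) := by
    intro F
    refine ⟨Or.inl rfl, ?_⟩
    rintro a x (rfl | hx)
    · exact Or.inl (by simp)
    · simp only [Set.mem_iUnion] at hx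
      obtain ⟨y, hy, b, rfl⟩ := hx
      refine Or.inr ?_
      simp only [Set.mem_iUnion]
      exact ⟨y, hy, a * b, (mul_assoc a b y).symm⟩
  set S : Set (Set A) := {I | ∃ F : Finset A, (∀ x ∈ F, ¬ IsUnit x) ∧ I = FI F} with hSdef
  have hSid : ∀ I ∈ S, IsMIdeal I := by
    rintro I ⟨F, _, rfl⟩; exact hFI_ideal F
  have hne : ∃ I, I ∈ S := ⟨FI ∅, ∅, by simp, rfl⟩
  obtain ⟨J, ⟨F, hF, rfl⟩, hmax⟩ := exists_maximal hN S hSid hne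
  refine ⟨F, hF, ?_⟩
  intro c hc
  have hcJ : c ∈ FI F := by
    by_contra hcJ
    have hmem : FI (insert c F) ∈ S := ⟨insert c F, by
      intro x hx
      rcases Finset.mem_insert.mp hx with rfl | hx
      · exact hc
      · exact hF x hx, rfl⟩
    have hsub : FI F ⊆ FI (insert c F) := by
      rintro z (rfl | hz)
      · exact Or.inl rfl
      · refine Or.inr ?_
        simp only [Set.mem_iUnion] at hz ⊢
        obtain ⟨y, hy, hzy⟩ := hz
        exact ⟨y, Finset.mem_insert_of_mem hy, hzy⟩
    have heq := hmax _ hmem hsub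
    apply hcJ
    rw [← heq]
    refine Or.inr ?_
    simp only [Set.mem_iUnion]
    exact ⟨c, Finset.mem_insert_self c F, mem_P c⟩
  rcases hcJ with rfl | hcJ
  · exact Or.inl rfl
  · simp only [Set.mem_iUnion] at hcJ
    obtain ⟨y, hy, b, hb⟩ := hcJ
    exact Or.inr ⟨y, hy, b, hb⟩

lemma map_prod_dvd (g : A → A) (s : Multiset A) (hg : ∀ c ∈ s, g c ∣ c) :
    (s.map g).prod ∣ s.prod := by
  induction s using Multiset.induction_on with
  | empty => simp
  | cons c s ih =>
    simp only [Multiset.map_cons, Multiset.prod_cons]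
    exact mul_dvd_mul (hg c (Multiset.mem_cons_self c s))
      (ih fun d hd => hg d (Multiset.mem_cons_of_mem hd))

/-- uniform nilpotency: every product of enough nonunits vanishes -/
lemma uniform_nilpotent (hN : MonNoetherian A)
    (hdim : ∀ p q : Set A, IsMPrime p → IsMPrime q → ¬ p ⊂ q)
    (h0 : ¬ IsUnit (0 : A)) :
    ∃ N, ∀ s : Multiset A, (∀ c ∈ s, ¬ IsUnit c) → N ≤ Multiset.card s →
      s.prod = 0 := by
  classical
  obtain ⟨F, hF, hgen⟩ := nonunits_fg hN h0
  choose! e he₁ he₂ using fun x (hx : x ∈ F) => nonunit_nilpotent hN hdim h0 (hF x hx)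
  set E : ℕ := F.sup e with hE
  refine ⟨F.card * E + 1, ?_⟩
  intro s hs hcard
  by_cases hz : (0 : A) ∈ s
  · exact Multiset.prod_eq_zero hz
  · have hdiv : ∀ c : A, ∃ x, c ∈ s → x ∈ F ∧ x ∣ c := by
      intro c
      by_cases hc : c ∈ s
      · rcases hgen c (hs c hc) with rfl | ⟨x, hx, b, hb⟩
        · exact absurd hc hz
        · exact ⟨x, fun _ => ⟨hx, ⟨b, by rw [hb, mul_comm]⟩⟩⟩
      · exact ⟨0, fun h => absurd h hc⟩
    choose g hg using hdiv
    set t : Multiset A := s.map g with ht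
    have htF : ∀ x ∈ t, x ∈ F := by
      intro x hx
      obtain ⟨c, hc, rfl⟩ := Multiset.mem_map.mp hx
      exact (hg c hc).1
    have hcount : ∃ x ∈ F, E < t.count x := by
      by_contra hc
      push_neg at hc
      have h1 : Multiset.card t = ∑ x ∈ t.toFinset, t.count x :=
        (Multiset.toFinset_sum_count_eq t).symm
      have h2 : ∑ x ∈ t.toFinset, t.count x ≤ ∑ x ∈ F, t.count x := by
        refine Finset.sum_le_sum_of_subset ?_
        intro x hx
        exact htF x (Multiset.mem_toFinset.mp hx)
      have h3 : ∑ x ∈ F, t.count x ≤ F.card * E := by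
        calc ∑ x ∈ F, t.count x ≤ ∑ _x ∈ F, E := Finset.sum_le_sum fun x hx => hc x hx
        _ = F.card * E := by rw [Finset.sum_const, smul_eq_mul]
      have h4 : Multiset.card t = Multiset.card s := Multiset.card_map g s
      omega
    obtain ⟨x, hxF, hxc⟩ := hcount
    have hrep : Multiset.replicate (e x) x ≤ t := by
      rw [Multiset.le_iff_count]
      intro a
      rw [Multiset.count_replicate]
      split_ifs with hax
      · subst hax
        have : e x ≤ E := Finset.le_sup hxF
        omega
      · omega
    have h5 : x ^ e x ∣ t.prod := by
      have := Multiset.prod_dvd_prod_of_le hrep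
      rwa [Multiset.prod_replicate] at this
    have h6 : t.prod ∣ s.prod := map_prod_dvd g s fun c hc => (hg c hc).2
    have : (0 : A) ∣ s.prod := by
      rw [← he₂ x hxF]
      exact h5.trans h6
    exact zero_dvd_iff.mp this

/-- filtration: elements divisible by a product of `k` nonunits -/
def V (k : ℕ) : Set A :=
  {x | ∃ b, ∃ s : Multiset A, Multiset.card s = k ∧ (∀ c ∈ s, ¬ IsUnit c) ∧ x = b * s.prod}

lemma mem_V_zero (x : A) : x ∈ V 0 :=
  ⟨x, 0, rfl, by simp, by simp⟩

lemma zero_mem_V (h0 : ¬ IsUnit (0 : A)) (k : ℕ) : (0 : A) ∈ V k :=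
  ⟨0, Multiset.replicate k 0, by rw [Multiset.card_replicate], by
    intro c hc; rw [Multiset.eq_of_mem_replicate hc]; exact h0, (zero_mul _).symm⟩

lemma mul_mem_V {x : A} {k : ℕ} (hx : x ∈ V k) (a : A) : a * x ∈ V k := by
  obtain ⟨b, s, hcard, hs, rfl⟩ := hx
  exact ⟨a * b, s, hcard, hs, (mul_assoc a b s.prod).symm⟩

lemma nonunit_mul_mem_V {x d : A} {k : ℕ} (hx : x ∈ V k) (hd : ¬ IsUnit d) :
    d * x ∈ V (k + 1) := by
  obtain ⟨b, s, hcard, hs, rfl⟩ := hx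
  refine ⟨b, d ::ₘ s, by simp [hcard], ?_, ?_⟩
  · intro c hc
    rcases Multiset.mem_cons.mp hc with rfl | hc
    · exact hd
    · exact hs c hc
  · rw [Multiset.prod_cons, mul_left_comm]


lemma step_lemma (hN : MonNoetherian A) (h0 : ¬ IsUnit (0 : A))
    (c : ℕ → Set A) (hci : ∀ n, IsMIdeal (c n)) (hcd : ∀ n, c (n + 1) ⊆ c n)
    (k M : ℕ) (hM : ∀ n, M ≤ n → c n ∩ V (k + 1) = c M ∩ V (k + 1)) :
    ∃ M', ∀ n, M' ≤ n → c n ∩ V k = c M' ∩ V k := by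
  have hanti : ∀ a b : ℕ, a ≤ b → c b ⊆ c a := by
    intro a b h
    induction b, h using Nat.le_induction with
    | base => exact subset_rfl
    | succ n hn ih => exact (hcd n).trans ih
  by_contra hcon
  push_neg at hcon
  have key : ∀ M', M ≤ M' →
      ∃ n, M' + 1 ≤ n ∧ ∃ x, x ∈ c M' ∧ x ∈ V k ∧ x ∉ V (k + 1) ∧ x ∉ c n := by
    intro M' hMM'
    obtain ⟨n, hn1, hn2⟩ := hcon M'
    have hlt : M' + 1 ≤ n := by
      rcases Nat.lt_or_ge M' n with h | h
      · omega
      · exfalso; apply hn2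
        have : n = M' := le_antisymm h hn1
        rw [this]
    have hss : c n ∩ V k ⊂ c M' ∩ V k :=
      (Set.ssubset_iff_subset_ne).mpr
        ⟨Set.inter_subset_inter_left _ (hanti M' n hn1), hn2⟩
    obtain ⟨x, hx1, hx2⟩ := Set.exists_of_ssubset hss
    obtain ⟨hxc, hxV⟩ := hx1
    have hxn : x ∉ c n := fun h => hx2 ⟨h, hxV⟩
    have hxV1 : x ∉ V (k + 1) := by
      intro hmem
      have h1 : x ∈ c M' ∩ V (k + 1) := ⟨hxc, hmem⟩
      rw [hM M' hMM', ← hM n (le_trans hMM' (by omega))] at h1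
      exact hxn h1.1
    exact ⟨n, hlt, x, hxc, hxV, hxV1, hxn⟩
  choose nf hnf xf hx1 hx2 hx3 hx4 using key
  let g : ℕ → {n : ℕ // M ≤ n} := fun j =>
    Nat.rec ⟨M, le_rfl⟩
      (fun _ ih => ⟨nf ih.1 ih.2,
        le_trans ih.2 (le_trans (Nat.le_succ _) (hnf ih.1 ih.2))⟩) j
  have hgsucc : ∀ j, (g j).1 + 1 ≤ (g (j + 1)).1 := fun j => hnf (g j).1 (g j).2
  have hgmono : ∀ j j', j ≤ j' → (g j).1 ≤ (g j').1 := by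
    intro j j' h
    induction j', h using Nat.le_induction with
    | base => exact le_rfl
    | succ n hn ih => exact le_trans ih (by have := hgsucc n; omega)
  set X : ℕ → A := fun j => xf (g j).1 (g j).2 with hX
  have hXc : ∀ j, X j ∈ c (g j).1 := fun j => hx1 _ _
  have hXV : ∀ j, X j ∈ V k := fun j => hx2 _ _
  have hXV1 : ∀ j, X j ∉ V (k + 1) := fun j => hx3 _ _
  have hXn : ∀ j j', j < j' → X j ∉ c (g j').1 := by
    intro j j' hjj' hmem
    have h1 : (g (j + 1)).1 ≤ (g j').1 := hgmono _ _ hjj'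
    exact hx4 (g j).1 (g j).2 (hanti _ _ h1 hmem)
  set K : ℕ → Set A := fun j => {z | ∃ i, i ≤ j ∧ ∃ b, z = b * X i} with hK
  have hKid : ∀ j, IsMIdeal (K j) := fun j =>
    ⟨⟨0, Nat.zero_le j, 0, (zero_mul _).symm⟩, by
      rintro a z ⟨i, hi, b, rfl⟩
      exact ⟨i, hi, a * b, (mul_assoc a b (X i)).symm⟩⟩
  have hKmono : ∀ j, K j ⊆ K (j + 1) := by
    rintro j z ⟨i, hi, b, rfl⟩
    exact ⟨i, by omega, b, rfl⟩
  obtain ⟨L, hL⟩ := hN K hKid hKmono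
  have hXK : X (L + 1) ∈ K L := by
    have : X (L + 1) ∈ K (L + 1) := ⟨L + 1, le_rfl, 1, (one_mul _).symm⟩
    rwa [hL (L + 1) (Nat.le_succ L)] at this
  obtain ⟨i, hiL, b, hb⟩ := hXK
  by_cases hu : IsUnit b
  · obtain ⟨u, rfl⟩ := hu
    have hXi : X i = ↑u⁻¹ * X (L + 1) := by
      rw [hb, ← mul_assoc, Units.inv_mul, one_mul]
    have hmem : X i ∈ c (g (L + 1)).1 := by
      rw [hXi]
      exact (hci (g (L + 1)).1).2 _ _ (hXc (L + 1))
    exact hXn i (L + 1) (by omega) hmem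
  · exact hXV1 (L + 1) (hb ▸ nonunit_mul_mem_V (hXV i) hu)

end ZDNA

/-- A noetherian commutative pointed monoid of Krull dimension zero (no strict chain
`p₀ ⊊ p₁` of prime ideals) is artinian: every descending chain of ideals stabilizes. -/
theorem zero_dimensional_noetherian_is_artinian
    {A : Type*} [CommMonoidWithZero A] (hN : MonNoetherian A)
    (hdim : ∀ p q : Set A, IsMPrime p → IsMPrime q → ¬ p ⊂ q) :
    ∀ c : ℕ → Set A, (∀ n, IsMIdeal (c n)) → (∀ n, c (n + 1) ⊆ c n) →
      ∃ N, ∀ m, N ≤ m → c m = c N := by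
  intro c hci hcd
  classical
  by_cases h0 : IsUnit (0 : A)
  · have hall : ∀ a : A, a = 0 := by
      intro a
      obtain ⟨u, hu⟩ := h0
      have h1 : (1 : A) = 0 := by
        calc (1 : A) = ↑u⁻¹ * ↑u := (Units.inv_mul u).symm
        _ = ↑u⁻¹ * 0 := by rw [hu]
        _ = 0 := mul_zero _
      calc a = a * 1 := (mul_one a).symm
      _ = a * 0 := by rw [h1]
      _ = 0 := mul_zero a
    refine ⟨0, fun m _ => ?_⟩
    ext z
    rw [hall z]
    exact ⟨fun _ => (hci 0).1, fun _ => (hci m).1⟩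
  · obtain ⟨NN, hNN⟩ := ZDNA.uniform_nilpotent hN hdim h0
    have main : ∀ j, ∃ M, ∀ n, M ≤ n →
        c n ∩ ZDNA.V (NN - j) = c M ∩ ZDNA.V (NN - j) := by
      intro j
      induction j with
      | zero =>
        refine ⟨0, fun n _ => ?_⟩
        have hVN : ∀ x : A, x ∈ ZDNA.V (A := A) (NN - 0) → x = 0 := by
          intro x hx
          obtain ⟨b, s, hcard, hs, rfl⟩ := hx
          rw [hNN s hs (by omega), mul_zero]
        ext z
        constructor
        · rintro ⟨h1, h2⟩
          have hz := hVN z h2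
          subst hz
          exact ⟨(hci 0).1, ZDNA.zero_mem_V h0 _⟩
        · rintro ⟨h1, h2⟩
          have hz := hVN z h2
          subst hz
          exact ⟨(hci n).1, ZDNA.zero_mem_V h0 _⟩
      | succ j ih =>
        obtain ⟨M, hM⟩ := ih
        by_cases hj : NN ≤ j
        · have heq : NN - (j + 1) = NN - j := by omega
          rw [heq]
          exact ⟨M, hM⟩
        · have heq : NN - j = (NN - (j + 1)) + 1 := by omega
          rw [heq] at hM
          exact ZDNA.step_lemma hN h0 c hci hcd (NN - (j + 1)) M hM
    obtain ⟨M, hM⟩ := main NN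
    have hV0 : (ZDNA.V 0 : Set A) = Set.univ := Set.eq_univ_of_forall ZDNA.mem_V_zero
    refine ⟨M, fun m hm => ?_⟩
    have h := hM m hm
    rwa [Nat.sub_self, hV0, Set.inter_univ, Set.inter_univ] at h
end

section
/- Let B be a commutative pointed monoid and A ⊆ B a submonoid with 0, 1 ∈ A such that every nonzero element x of A is cancellable in B (xb = xb′ implies b = b′). Let I ⊆ A be an ideal of A with I ≠ {0} which is finitely generated (there is a finite Y ⊆ I such that every element of I is of the form a·y with a ∈ A, y ∈ Y). If b ∈ B satisfies b·I ⊆ I, then b is integral over A: bⁿ ∈ A for some n ≥ 1. -/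
/-- Let `B` be a commutative pointed monoid and `A ⊆ B` a submonoid containing `0` and `1`
whose nonzero elements are cancellable in `B`.  If `I ⊆ A` is a nonzero finitely generated
ideal of `A` and `b ∈ B` satisfies `b • I ⊆ I`, then `b` is integral over `A`:
`b ^ n ∈ A` for some `n ≥ 1`. -/
theorem integral_of_stabilizes_fg_ideal
    {B : Type*} [CommMonoidWithZero B] (A : Set B)
    (h0 : (0 : B) ∈ A) (h1 : (1 : B) ∈ A)
    (hmul : ∀ x ∈ A, ∀ y ∈ A, x * y ∈ A)
    (hcancel : ∀ x ∈ A, x ≠ 0 → ∀ b b' : B, x * b = x * b' → b = b')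
    (I : Set B) (hIA : I ⊆ A) (h0I : (0 : B) ∈ I)
    (hIdeal : ∀ a ∈ A, ∀ x ∈ I, a * x ∈ I)
    (hInz : I ≠ {0})
    (hfg : ∃ Y : Finset B, (Y : Set B) ⊆ I ∧ ∀ x ∈ I, ∃ a ∈ A, ∃ y ∈ Y, x = a * y)
    (b : B) (hb : ∀ x ∈ I, b * x ∈ I) :
    ∃ n : ℕ, 1 ≤ n ∧ b ^ n ∈ A := by
  classical
  obtain ⟨Y, hYI, hgen⟩ := hfg
  -- there is a nonzero element of I
  have hx : ∃ x ∈ I, x ≠ 0 := by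
    by_contra h
    push_neg at h
    apply hInz
    ext w
    simp only [Set.mem_singleton_iff]
    exact ⟨fun hw => h w hw, fun hw => hw ▸ h0I⟩
  obtain ⟨x, hxI, hxne⟩ := hx
  by_cases hb0 : b = 0
  · exact ⟨1, le_refl 1, by simpa [hb0] using h0⟩
  -- powers of b times x stay in I
  have hpow : ∀ n : ℕ, b ^ n * x ∈ I := by
    intro n
    induction n with
    | zero => simpa using hxI
    | succ n ih =>
        rw [pow_succ, mul_comm (b ^ n) b, mul_assoc]
        exact hb _ ih
  -- and they are nonzero
  have hpownz : ∀ n : ℕ, b ^ n * x ≠ 0 := by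
    intro n
    induction n with
    | zero => simpa using hxne
    | succ n ih =>
        intro hcon
        apply hb0
        have h1' : (b ^ n * x) * b = (b ^ n * x) * 0 := by
          rw [mul_zero, mul_comm (b ^ n * x) b, ← mul_assoc, mul_comm b (b ^ n), ← pow_succ]
          exact hcon
        exact hcancel _ (hIA (hpow n)) ih b 0 h1'
  -- choose transition functions on Y
  have hby : ∀ y ∈ Y, ∃ a ∈ A, ∃ w ∈ Y, b * y = a * w := by
    intro y hy
    exact hgen _ (hb y (hYI hy))
  choose! a haA z hzY heq using hby
  -- iterating: b ^ n * y = c * z^[n] y with c ∈ A, z^[n] y ∈ Y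
  have hiter : ∀ n : ℕ, ∀ y ∈ Y, z^[n] y ∈ Y ∧ ∃ c ∈ A, b ^ n * y = c * z^[n] y := by
    intro n
    induction n with
    | zero => intro y hy; exact ⟨hy, 1, h1, by simp⟩
    | succ n ih =>
        intro y hy
        obtain ⟨hmem, c, hcA, hc⟩ := ih y hy
        refine ⟨?_, c * a (z^[n] y), hmul _ hcA _ (haA _ hmem), ?_⟩
        · rw [Function.iterate_succ_apply']
          exact hzY _ hmem
        · rw [Function.iterate_succ_apply', pow_succ, mul_comm (b ^ n) b, mul_assoc, hc,
            ← mul_assoc, mul_comm b c, mul_assoc, heq _ hmem, ← mul_assoc]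
  -- write x = a0 * y0 with y0 ∈ Y
  obtain ⟨a0, ha0A, y0, hy0Y, hx0⟩ := hgen x hxI
  -- pigeonhole on the iterates of y0
  have : ∃ m n : ℕ, m ≠ n ∧
      (⟨z^[m] y0, (hiter m y0 hy0Y).1⟩ : {u // u ∈ Y}) = ⟨z^[n] y0, (hiter n y0 hy0Y).1⟩ := by
    exact Finite.exists_ne_map_eq_of_infinite _
  obtain ⟨m, n, hmn, hfeq⟩ := this
  have hfeq' : z^[m] y0 = z^[n] y0 := congrArg Subtype.val hfeq
  -- WLOG m < n
  rcases hmn.lt_or_gt with hlt | hlt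
  · -- m < n
    have hwY : z^[m] y0 ∈ Y := (hiter m y0 hy0Y).1
    have hwA : z^[m] y0 ∈ A := hIA (hYI hwY)
    -- w ≠ 0
    have hwne : z^[m] y0 ≠ 0 := by
      intro h
      obtain ⟨c, hcA, hc⟩ := (hiter m y0 hy0Y).2
      apply hpownz m
      rw [hx0, ← mul_assoc, mul_comm (b ^ m) a0, mul_assoc, hc, h, mul_zero, mul_zero]
    -- b ^ (n - m) * w = c * w
    have hzw : z^[n - m] (z^[m] y0) = z^[m] y0 := by
      rw [← Function.iterate_add_apply, Nat.sub_add_cancel hlt.le]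
      exact hfeq'.symm
    obtain ⟨c, hcA, hc⟩ := (hiter (n - m) (z^[m] y0) hwY).2
    rw [hzw] at hc
    refine ⟨n - m, by omega, ?_⟩
    have h' : z^[m] y0 * b ^ (n - m) = z^[m] y0 * c := by
      rw [mul_comm _ (b ^ (n - m)), mul_comm _ c]; exact hc
    rw [hcancel _ hwA hwne _ _ h']
    exact hcA
  · -- n < m : symmetric
    have hwY : z^[n] y0 ∈ Y := (hiter n y0 hy0Y).1
    have hwA : z^[n] y0 ∈ A := hIA (hYI hwY)
    have hwne : z^[n] y0 ≠ 0 := by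
      intro h
      obtain ⟨c, hcA, hc⟩ := (hiter n y0 hy0Y).2
      apply hpownz n
      rw [hx0, ← mul_assoc, mul_comm (b ^ n) a0, mul_assoc, hc, h, mul_zero, mul_zero]
    have hzw : z^[m - n] (z^[n] y0) = z^[n] y0 := by
      rw [← Function.iterate_add_apply, Nat.sub_add_cancel hlt.le]
      exact hfeq'
    obtain ⟨c, hcA, hc⟩ := (hiter (m - n) (z^[n] y0) hwY).2
    rw [hzw] at hc
    refine ⟨m - n, by omega, ?_⟩
    have h' : z^[n] y0 * b ^ (m - n) = z^[n] y0 * c := by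
      rw [mul_comm _ (b ^ (m - n)), mul_comm _ c]; exact hc
    rw [hcancel _ hwA hwne _ _ h']
    exact hcA
end

section
/- Every noetherian, one-dimensional, normal cancellative commutative pointed monoid is a discrete valuation monoid: if A is a cancellative commutative pointed monoid that is noetherian, normal (integrally closed in its group completion A₀) and of Krull dimension one, then there exists π ∈ A such that the maximal ideal m = A ∖ A^× equals πA = {aπ : a ∈ A}, and every nonzero a ∈ A can be written as a = u·πⁿ for a unique unit u ∈ A^× and a unique natural number n. -/
/-- A cancellative commutative pointed monoid is normal when it is integrally closed in
its group completion: any fraction `a / s` (with `s ≠ 0`) some power of which lies in `A`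
(i.e. `a ^ n = c * s ^ n` for some `c ∈ A`, `n ≥ 1`) already lies in `A`
(i.e. `s ∣ a`). -/
def MonNormal (A : Type*) [CommMonoidWithZero A] [IsCancelMulZero A] : Prop :=
  ∀ a s : A, s ≠ 0 → (∃ n : ℕ, 1 ≤ n ∧ ∃ c : A, a ^ n = c * s ^ n) → s ∣ a

/-!
Pick a nonzero nonunit `x`. A colon ideal `(x : b) = {a | x ∣ a * b}` that is maximal among those
with `x ∤ b` is prime; it contains `x ≠ 0`, so in dimension one it is the maximal ideal `m`.
Thus `(b / x) m ⊆ A` while `b / x ∉ A`. If `(b / x) m ⊆ m`, the ascending chain condition makes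
`b / x` integral, contradicting normality; otherwise `(b / x) π` is a unit for some `π ∈ m`, and
then `m = π A`. The ascending chain condition also bounds the powers of `π` dividing any `a ≠ 0`.
-/

theorem pow_mul_eq_pow_mul_of_mul_eq_mul {M : Type*} [CommMonoid M] {x b : M} {d : ℕ → M}
    (hd : ∀ n, d n * b = x * d (n + 1)) (n : ℕ) : x ^ n * d n = b ^ n * d 0 := by
  induction n with
  | zero => simp
  | succ n ih =>
    calc x ^ (n + 1) * d (n + 1) = x ^ n * d n * b := by
          rw [pow_succ, mul_assoc, ← hd, mul_assoc]
      _ = b ^ (n + 1) * d 0 := by rw [ih, pow_succ]; ac_rfl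

section Ideals

variable {A : Type*} [CommMonoidWithZero A]

theorem IsMIdeal.not_isUnit_of_mem {I : Set A} (hI : IsMIdeal I) (hI_ne : I ≠ Set.univ)
    {y : A} (hy : y ∈ I) : ¬IsUnit y := by
  rintro ⟨u, rfl⟩
  refine hI_ne (Set.eq_univ_of_forall fun z => ?_)
  simpa using hI.2 (z * ↑u⁻¹) u hy

theorem isMIdeal_setOf_dvd_mul (x b : A) : IsMIdeal {a | x ∣ a * b} :=
  ⟨by simp, fun a y hy => by simpa [mul_assoc] using hy.mul_left a⟩

theorem isMPrime_nonunits [Nontrivial A] : IsMPrime {a : A | ¬IsUnit a} :=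
  ⟨⟨not_isUnit_zero, fun _ _ hx hax => hx (isUnit_of_mul_isUnit_right hax)⟩,
    fun h => (h ▸ Set.mem_univ (1 : A)) isUnit_one,
    fun _ _ hab => not_and_or.mp fun ⟨ha, hb⟩ => hab (ha.mul hb)⟩

theorem isMPrime_zero [Nontrivial A] [NoZeroDivisors A] : IsMPrime ({0} : Set A) :=
  ⟨⟨rfl, fun a x (hx : x = 0) => by simp [hx]⟩, fun h => one_ne_zero (h ▸ Set.mem_univ (1 : A)),
    fun _ _ hab => mul_eq_zero.mp hab⟩

end Ideals

namespace MonNoetherian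

variable {A : Type*} [CommMonoidWithZero A]

theorem wellFoundedGT (hN : MonNoetherian A) : WellFoundedGT {I : Set A // IsMIdeal I} := by
  rw [wellFoundedGT_iff_monotone_chain_condition]
  intro c
  obtain ⟨N, hN⟩ := hN (fun n => c n) (fun n => (c n).2) fun n => c.monotone n.le_succ
  exact ⟨N, fun m hm => Subtype.ext (hN m hm).symm⟩

theorem exists_maximal (hN : MonNoetherian A) {S : Set (Set A)} (hS : ∀ I ∈ S, IsMIdeal I)
    (hS_ne : S.Nonempty) : ∃ I ∈ S, ∀ J ∈ S, ¬I ⊂ J := by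
  have := hN.wellFoundedGT
  obtain ⟨I₀, hI₀⟩ := hS_ne
  obtain ⟨I, hI, hmax⟩ :=
    wellFounded_gt.has_min {I : {I // IsMIdeal I} | I.1 ∈ S} ⟨⟨I₀, hS I₀ hI₀⟩, hI₀⟩
  exact ⟨I.1, hI, fun J hJ => hmax ⟨J, hS J hJ⟩ hJ⟩

theorem exists_dvd_of_lt (hN : MonNoetherian A) (d : ℕ → A) : ∃ k n, k < n ∧ d k ∣ d n := by
  obtain ⟨N, hN⟩ := hN (fun n => {y | ∃ k ≤ n, d k ∣ y})
    (fun n => ⟨⟨0, n.zero_le, dvd_zero _⟩, fun a _ ⟨k, hk, hdy⟩ => ⟨k, hk, hdy.mul_left a⟩⟩)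
    fun n _ ⟨k, hk, hdy⟩ => ⟨k, hk.trans n.le_succ, hdy⟩
  obtain ⟨k, hk, hdvd⟩ : d (N + 1) ∈ {y | ∃ k ≤ N, d k ∣ y} :=
    hN (N + 1) N.le_succ ▸ ⟨N + 1, le_rfl, dvd_rfl⟩
  exact ⟨k, N + 1, Nat.lt_succ_of_le hk, hdvd⟩

theorem exists_isMPrime_setOf_dvd_mul (hN : MonNoetherian A) {x : A} (hx : ¬IsUnit x) :
    ∃ b, ¬x ∣ b ∧ IsMPrime {a | x ∣ a * b} := by
  obtain ⟨_, ⟨b, hxb, rfl⟩, hmax⟩ := hN.exists_maximal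
    (S := {I | ∃ b, ¬x ∣ b ∧ I = {a | x ∣ a * b}})
    (by rintro _ ⟨b, -, rfl⟩; exact isMIdeal_setOf_dvd_mul x b)
    ⟨_, 1, fun h => hx (isUnit_of_dvd_one h), rfl⟩
  refine ⟨b, hxb, isMIdeal_setOf_dvd_mul x b,
    fun h => hxb (by simpa using Set.eq_univ_iff_forall.mp h 1), fun u v huv => ?_⟩
  by_contra! ⟨hu, hv⟩
  have hsub : {a | x ∣ a * b} ⊆ {a | x ∣ a * (u * b)} := fun a ha => by
    simpa [mul_left_comm a u b] using ha.mul_left u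
  have heq := hsub.eq_of_not_ssubset (hmax _ ⟨u * b, by simpa [mul_comm] using hu, rfl⟩)
  exact hv (heq ▸ show v ∈ {a | x ∣ a * (u * b)} by simpa [mul_assoc, mul_comm v] using huv)

end MonNoetherian

section Cancellative

variable {A : Type*} [CommMonoidWithZero A] [IsCancelMulZero A]

theorem eq_nonunits_of_isMPrime
    (hdim_le : ∀ p q r : Set A, IsMPrime p → IsMPrime q → IsMPrime r → p ⊂ q → ¬q ⊂ r)
    {p : Set A} (hp : IsMPrime p) {y : A} (hy : y ∈ p) (hy0 : y ≠ 0) :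
    p = {a | ¬IsUnit a} := by
  have : Nontrivial A := ⟨⟨y, 0, hy0⟩⟩
  have hp_sub : p ⊆ {a | ¬IsUnit a} := fun _ => hp.1.not_isUnit_of_mem hp.2.1
  by_contra hne
  refine hdim_le _ _ _ isMPrime_zero hp isMPrime_nonunits ?_ (hp_sub.ssubset_of_ne hne)
  exact Set.ssubset_iff_of_subset (by simpa using hp.1.1) |>.mpr ⟨y, hy, hy0⟩

namespace MonNoetherian

/-- If `b / x` maps a set containing `x` into itself, then `x`, `x (b / x)`, `x (b / x) ^ 2`, …
all lie in `A`, and the ascending chain condition makes `b / x` integral. -/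
theorem exists_pow_eq_mul_pow (hN : MonNoetherian A) {x b : A} (hb : b ≠ 0) (hx0 : x ≠ 0)
    {I : Set A} (hxI : x ∈ I) (hI : ∀ y ∈ I, ∃ z ∈ I, y * b = x * z) :
    ∃ n, 1 ≤ n ∧ ∃ c, b ^ n = c * x ^ n := by
  choose! f hfI hf using hI
  set d : ℕ → A := fun n => f^[n] x with hd_def
  have hdI : ∀ n, d n ∈ I := fun n => by
    induction n with
    | zero => exact hxI
    | succ n ih => simpa [hd_def, Function.iterate_succ_apply'] using hfI _ ih
  have hd : ∀ n, d n * b = x * d (n + 1) := fun n => by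
    simpa [hd_def, Function.iterate_succ_apply'] using hf _ (hdI n)
  obtain ⟨k, n, hkn, c, hc⟩ := hN.exists_dvd_of_lt d
  obtain ⟨m, rfl⟩ := Nat.exists_eq_add_of_lt hkn
  refine ⟨m + 1, m.succ_pos, c, mul_left_cancel₀ (mul_ne_zero (pow_ne_zero k hb) hx0) ?_⟩
  have hk : x ^ k * d k = b ^ k * x := pow_mul_eq_pow_mul_of_mul_eq_mul hd k
  have hn : x ^ (k + m + 1) * d (k + m + 1) = b ^ (k + m + 1) * x :=
    pow_mul_eq_pow_mul_of_mul_eq_mul hd _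
  calc b ^ k * x * b ^ (m + 1) = x ^ (k + m + 1) * d (k + m + 1) := by
        rw [hn, add_assoc, pow_add b k]; ac_rfl
    _ = x ^ (m + 1) * (x ^ k * d k) * c := by rw [hc, add_assoc, pow_add x k]; ac_rfl
    _ = b ^ k * x * (c * x ^ (m + 1)) := by
        rw [hk]; simp only [mul_comm, mul_left_comm]

theorem exists_not_pow_dvd (hN : MonNoetherian A) {π a : A} (hπ : ¬IsUnit π) (ha : a ≠ 0) :
    ∃ n, ¬π ^ n ∣ a := by
  by_contra! hdvd
  choose d hd using hdvd
  obtain ⟨k, n, hkn, c, hc⟩ := hN.exists_dvd_of_lt d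
  obtain ⟨m, rfl⟩ := Nat.exists_eq_add_of_lt hkn
  have hdk : π ^ k * d k ≠ 0 := hd k ▸ ha
  refine hπ (isUnit_of_dvd_one ⟨π ^ m * c, mul_left_cancel₀ hdk ?_⟩)
  calc π ^ k * d k * 1 = π ^ (k + m + 1) * d (k + m + 1) := by rw [← hd, ← hd, mul_one]
    _ = π ^ k * d k * (π * (π ^ m * c)) := by rw [hc, pow_succ, pow_add]; ac_rfl

theorem exists_principal_nonunits (hN : MonNoetherian A) (hnormal : MonNormal A) {x b : A}
    (hx0 : x ≠ 0) (hx : ¬IsUnit x) (hxb : ¬x ∣ b) (hb : ∀ y, ¬IsUnit y → x ∣ y * b) :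
    ∃ π : A, ¬IsUnit π ∧ ∀ y, ¬IsUnit y → π ∣ y := by
  have hb0 : b ≠ 0 := fun h => hxb (h ▸ dvd_zero x)
  by_cases hunit : ∃ π : A, ¬IsUnit π ∧ ∃ u : Aˣ, π * b = x * u
  · obtain ⟨π, hπ, u, hπb⟩ := hunit
    refine ⟨π, hπ, fun y hy => ?_⟩
    obtain ⟨c, hc⟩ := hb y hy
    refine ⟨↑u⁻¹ * c, mul_right_cancel₀ hb0 ?_⟩
    calc y * b = x * u * ↑u⁻¹ * c := by rw [hc, Units.mul_inv_cancel_right]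
      _ = π * (↑u⁻¹ * c) * b := by rw [← hπb]; ac_rfl
  · push Not at hunit
    obtain ⟨n, hn, c, hc⟩ := hN.exists_pow_eq_mul_pow hb0 hx0 (I := {a | ¬IsUnit a}) hx
      fun y hy => by
        obtain ⟨z, hz⟩ := hb y hy
        exact ⟨z, fun ⟨u, hu⟩ => hunit y hy u (hu ▸ hz), hz⟩
    exact absurd (hnormal b x hx0 ⟨n, hn, c, hc⟩) hxb

theorem exists_eq_unit_mul_pow (hN : MonNoetherian A) {π : A} (hπ : ¬IsUnit π)
    (hπ_dvd : ∀ y, ¬IsUnit y → π ∣ y) {a : A} (ha : a ≠ 0) :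
    ∃ (u : Aˣ) (n : ℕ), a = u * π ^ n := by
  classical
  have hex := hN.exists_not_pow_dvd hπ ha
  obtain ⟨k, hk⟩ : ∃ k, Nat.find hex = k + 1 :=
    Nat.exists_eq_add_one.mpr <| Nat.pos_of_ne_zero fun h => by
      simpa [h] using Nat.find_spec hex
  obtain ⟨v, rfl⟩ : π ^ k ∣ a := not_not.mp (Nat.find_min hex (by omega))
  have hv : IsUnit v := by
    by_contra hv
    exact Nat.find_spec hex (hk ▸ pow_succ π k ▸ mul_dvd_mul_left _ (hπ_dvd v hv))
  exact ⟨hv.unit, k, mul_comm _ _⟩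

end MonNoetherian

theorem unit_mul_pow_congr {π : A} (hπ0 : π ≠ 0) (hπ : ¬IsUnit π) {u v : Aˣ} {m n : ℕ}
    (h : u * π ^ m = v * π ^ n) : u = v ∧ m = n := by
  wlog hmn : m ≤ n generalizing u v m n
  · obtain ⟨huv, hmn⟩ := this h.symm (le_of_not_ge hmn)
    exact ⟨huv.symm, hmn.symm⟩
  obtain ⟨k, rfl⟩ := Nat.exists_eq_add_of_le hmn
  rw [pow_add, mul_comm (u : A), mul_left_comm, mul_comm (v : A)] at h
  have huv : (u : A) = π ^ k * v := mul_left_cancel₀ (pow_ne_zero m hπ0) h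
  cases k with
  | zero => exact ⟨Units.ext (by simpa using huv), rfl⟩
  | succ k =>
    have hπu : π ∣ u := ⟨π ^ k * v, by rw [huv, pow_succ', mul_assoc]⟩
    exact absurd (isUnit_of_dvd_unit hπu u.isUnit) hπ

end Cancellative

/-- Every noetherian, one-dimensional, normal cancellative commutative pointed monoid is
a discrete valuation monoid: there is a `π` generating the maximal ideal
`m = A ∖ A^× = πA`, and every nonzero `a ∈ A` is uniquely `u * π ^ n` with
`u` a unit and `n : ℕ`. -/
theorem noetherian_one_dimensional_normal_is_discrete_valuation
    {A : Type*} [CommMonoidWithZero A] [IsCancelMulZero A]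
    (hN : MonNoetherian A) (hnormal : MonNormal A)
    (hdim_ge : ∃ p q : Set A, IsMPrime p ∧ IsMPrime q ∧ p ⊂ q)
    (hdim_le : ∀ p q r : Set A, IsMPrime p → IsMPrime q → IsMPrime r →
      p ⊂ q → ¬ q ⊂ r) :
    ∃ π : A, {a : A | ¬ IsUnit a} = {x : A | ∃ a : A, x = a * π} ∧
      ∀ a : A, a ≠ 0 → ∃! un : Aˣ × ℕ, a = (un.1 : A) * π ^ un.2 := by
  obtain ⟨p, q, hp, hq, hpq⟩ := hdim_ge
  obtain ⟨x, hxq, hxp⟩ := Set.exists_of_ssubset hpq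
  have hx0 : x ≠ 0 := fun h => hxp (h ▸ hp.1.1)
  have hx : ¬IsUnit x := hq.1.not_isUnit_of_mem hq.2.1 hxq
  obtain ⟨b, hxb, hprime⟩ := hN.exists_isMPrime_setOf_dvd_mul hx
  have hm : {a | x ∣ a * b} = {a | ¬IsUnit a} :=
    eq_nonunits_of_isMPrime hdim_le hprime (dvd_mul_right x b) hx0
  obtain ⟨π, hπ, hπ_dvd⟩ :=
    hN.exists_principal_nonunits hnormal hx0 hx hxb fun y hy => hm.ge hy
  have hπ0 : π ≠ 0 := fun h => hx0 (zero_dvd_iff.mp (h ▸ hπ_dvd x hx))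
  refine ⟨π, Set.ext fun y => ⟨fun hy => ?_, ?_⟩, fun a ha => ?_⟩
  · obtain ⟨c, rfl⟩ := hπ_dvd y hy
    exact ⟨c, mul_comm π c⟩
  · rintro ⟨c, rfl⟩ hu
    exact hπ (isUnit_of_mul_isUnit_right hu)
  · obtain ⟨u, n, rfl⟩ := hN.exists_eq_unit_mul_pow hπ hπ_dvd ha
    refine ⟨(u, n), rfl, fun ⟨v, k⟩ h => ?_⟩
    obtain ⟨rfl, rfl⟩ := unit_mul_pow_congr hπ0 hπ h.symm
    rfl
end

section
/- Let A be a commutative pointed monoid and a ∈ A a nonzero element whose annihilator I = (0 : a) = {b ∈ A : ba = 0} is maximal among annihilators of nonzero elements, i.e. for every nonzero b ∈ A, if I ⊆ (0 : b) then I = (0 : b). Then I is a prime ideal of A. -/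
/-- If the annihilator `(0 : a) = {b | b * a = 0}` of a nonzero element `a` of a
commutative pointed monoid is maximal among annihilators of nonzero elements, then it is
a prime ideal. -/
theorem maximal_annihilator_is_prime
    {A : Type*} [CommMonoidWithZero A] (a : A) (ha : a ≠ 0)
    (hmax : ∀ b : A, b ≠ 0 →
      {c : A | c * a = 0} ⊆ {c : A | c * b = 0} →
      {c : A | c * a = 0} = {c : A | c * b = 0}) :
    IsMPrime {c : A | c * a = 0} := by
  refine ⟨⟨by simp, fun b x hx => ?_⟩, ?_, ?_⟩
  · simp only [Set.mem_setOf_eq] at hx ⊢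
    rw [mul_assoc, hx, mul_zero]
  · intro h
    have : (1 : A) ∈ {c : A | c * a = 0} := h ▸ Set.mem_univ 1
    simp only [Set.mem_setOf_eq, one_mul] at this
    exact ha this
  · intro x y hxy
    by_cases hxa : x * a = 0
    · exact Or.inl hxa
    · right
      have hsub : {c : A | c * a = 0} ⊆ {c : A | c * (x * a) = 0} := by
        intro c hc
        simp only [Set.mem_setOf_eq] at hc ⊢
        rw [mul_comm x a, ← mul_assoc, hc, zero_mul]
      have heq := hmax (x * a) hxa hsub
      have hy : y ∈ {c : A | c * (x * a) = 0} := by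
        simp only [Set.mem_setOf_eq]
        rw [← mul_assoc, mul_comm y x]
        exact hxy
      rw [← heq] at hy
      exact hy
end

section
/- Classification of projective A-sets: let A be a commutative pointed monoid and P a projective A-set, i.e. for every surjective morphism of A-sets f : X → Y and every morphism g : P → Y there exists a morphism φ : P → X with f ∘ φ = g. Then P is isomorphic to a wedge of A-sets generated by idempotents: there exist an index type ι, a family of idempotents e : ι → A (with eᵢ·eᵢ = eᵢ) and a family of elements x : ι → P such that (a) eᵢ·xᵢ = xᵢ for each i; (b) every nonzero element of P equals a·xᵢ for some i ∈ ι and a ∈ A; (c) for i ≠ j and a, b ∈ A, if a·xᵢ = b·xⱼ then a·xᵢ = 0; and (d) for each i and all a, b ∈ A, a·xᵢ = b·xᵢ if and only if a·eᵢ = b·eᵢ. Equivalently, P is isomorphic as an A-set to the wedge sum ⋁_{i∈ι} A·eᵢ (the disjoint union of the A-sets A·eᵢ ⊆ A with their basepoints 0 identified). -/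
universe u

/-- Setoid identifying all pairs with second component `0`. -/
def wedgeRel (A P : Type u) [Zero A] : Setoid (P × A) where
  r x y := x = y ∨ (x.2 = 0 ∧ y.2 = 0)
  iseqv := by
    refine ⟨fun x => Or.inl rfl, ?_, ?_⟩
    · rintro x y (rfl | ⟨h1, h2⟩)
      · exact Or.inl rfl
      · exact Or.inr ⟨h2, h1⟩
    · rintro x y z (rfl | ⟨h1, h2⟩) (rfl | ⟨h3, h4⟩) <;> simp_all

/-- The wedge of copies of `A` indexed by `P`. -/
def FreeWedge (A P : Type u) [Zero A] : Type u := Quotient (wedgeRel A P)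

variable {A P : Type u} [CommMonoidWithZero A] [Zero P]

def FreeWedge.mk (p : P) (a : A) : FreeWedge A P := Quotient.mk (wedgeRel A P) (p, a)

lemma FreeWedge.mk_eq_mk {p q : P} {a b : A} :
    FreeWedge.mk p a = FreeWedge.mk q b ↔ (p = q ∧ a = b) ∨ (a = 0 ∧ b = 0) := by
  constructor
  · intro h
    rcases Quotient.exact h with h' | h'
    · exact Or.inl ⟨congrArg Prod.fst h', congrArg Prod.snd h'⟩
    · exact Or.inr h'
  · rintro (⟨rfl, rfl⟩ | h)
    · rfl
    · exact Quotient.sound (Or.inr h)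

instance : Zero (FreeWedge A P) := ⟨FreeWedge.mk 0 0⟩

lemma FreeWedge.zero_def : (0 : FreeWedge A P) = FreeWedge.mk 0 0 := rfl

lemma FreeWedge.mk_eq_zero {p : P} {a : A} : FreeWedge.mk p a = 0 ↔ a = 0 := by
  rw [zero_def, mk_eq_mk]; constructor
  · rintro (⟨rfl, rfl⟩ | ⟨h, -⟩) <;> simp [*]
  · intro h; exact Or.inr ⟨h, rfl⟩

instance : SMul A (FreeWedge A P) where
  smul a := Quotient.map (fun x => (x.1, a * x.2)) (by
    rintro x y (rfl | ⟨h1, h2⟩)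
    · exact Or.inl rfl
    · exact Or.inr ⟨by simp [h1], by simp [h2]⟩)

lemma FreeWedge.smul_mk (a : A) (p : P) (b : A) :
    a • FreeWedge.mk p b = FreeWedge.mk p (a * b) := rfl

instance : MulActionWithZero A (FreeWedge A P) where
  one_smul x := by
    induction x using Quotient.ind with
    | _ x => show FreeWedge.mk x.1 (1 * x.2) = FreeWedge.mk x.1 x.2; rw [one_mul]
  mul_smul a b x := by
    induction x using Quotient.ind with
    | _ x =>
      show FreeWedge.mk x.1 (a * b * x.2) = FreeWedge.mk x.1 (a * (b * x.2))
      rw [mul_assoc]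
  smul_zero a := by
    show FreeWedge.mk (0 : P) (a * 0) = 0
    rw [mul_zero]; rfl
  zero_smul x := by
    induction x using Quotient.ind with
    | _ x =>
      show FreeWedge.mk x.1 (0 * x.2) = 0
      rw [FreeWedge.mk_eq_zero, zero_mul]

/-- Classification of projective `A`-sets: a projective `A`-set `P` (one having the
lifting property against all surjective morphisms of `A`-sets) is a wedge of `A`-sets
generated by idempotents: there are idempotents `e i ∈ A` and elements `x i ∈ P` with
`e i • x i = x i`, every nonzero element of `P` is `a • x i` for some `i` and `a ∈ A`,
distinct summands meet only in `0`, and `a • x i = b • x i` iff `a * e i = b * e i`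
(so the summand generated by `x i` is isomorphic to `A • e i`). -/
theorem projective_ASet_classification
    {A : Type u} [CommMonoidWithZero A] (P : Type u) [Zero P] [MulActionWithZero A P]
    (hproj : ∀ (X Y : Type u) [Zero X] [MulActionWithZero A X] [Zero Y]
      [MulActionWithZero A Y] (f : X → Y), Function.Surjective f → f 0 = 0 →
      (∀ (a : A) (x : X), f (a • x) = a • f x) →
      ∀ g : P → Y, g 0 = 0 → (∀ (a : A) (z : P), g (a • z) = a • g z) →
      ∃ φ : P → X, φ 0 = 0 ∧ (∀ (a : A) (z : P), φ (a • z) = a • φ z) ∧ f ∘ φ = g) :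
    ∃ (ι : Type u) (e : ι → A) (x : ι → P),
      (∀ i, e i * e i = e i) ∧
      (∀ i, e i • x i = x i) ∧
      (∀ y : P, y ≠ 0 → ∃ (i : ι) (a : A), y = a • x i) ∧
      (∀ i j, i ≠ j → ∀ a b : A, a • x i = b • x j → a • x i = 0) ∧
      (∀ i, ∀ a b : A, a • x i = b • x i ↔ a * e i = b * e i) := by
  classical
  -- the surjection f : FreeWedge A P → P
  set f : FreeWedge A P → P := Quotient.lift (fun x : P × A => x.2 • x.1) (by
    rintro x y (rfl | ⟨h1, h2⟩)
    · rfl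
    · simp [h1, h2]) with hf
  have f_mk : ∀ (p : P) (a : A), f (FreeWedge.mk p a) = a • p := fun _ _ => rfl
  have f_surj : Function.Surjective f := fun p => ⟨FreeWedge.mk p 1, by simp [f_mk]⟩
  have f_zero : f 0 = 0 := by
    show f (FreeWedge.mk (0:P) (0:A)) = 0
    rw [f_mk, zero_smul]
  have f_smul : ∀ (a : A) (x : FreeWedge A P), f (a • x) = a • f x := by
    intro a x
    induction x using Quotient.ind with
    | _ x =>
      show f (a • FreeWedge.mk x.1 x.2) = a • f (FreeWedge.mk x.1 x.2)
      rw [FreeWedge.smul_mk, f_mk, f_mk, mul_smul]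
  obtain ⟨φ, hφ0, hφs, hφf⟩ := hproj (FreeWedge A P) P f f_surj f_zero f_smul id rfl
    (fun _ _ => rfl)
  have hfφ : ∀ z : P, f (φ z) = z := fun z => congrFun hφf z
  -- the key analysis of the section φ
  have key : ∀ z : P, z ≠ 0 → ∃ (p : P) (b a : A),
      p ≠ 0 ∧ b * b = b ∧ b • p = p ∧ φ p = FreeWedge.mk p b ∧ z = a • p := by
    intro z hz
    obtain ⟨⟨p, a⟩, hpa⟩ := Quotient.exists_rep (φ z)
    have hpa : φ z = FreeWedge.mk p a := hpa.symm
    have hz' : z = a • p := by rw [← hfφ z, hpa, f_mk]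
    have ha : a ≠ 0 := by
      rintro rfl; exact hz (by rw [hz', zero_smul])
    have hp : p ≠ 0 := by
      rintro rfl; exact hz (by rw [hz', smul_zero])
    obtain ⟨⟨q, b⟩, hqb⟩ := Quotient.exists_rep (φ p)
    have hqb : φ p = FreeWedge.mk q b := hqb.symm
    have h1 : FreeWedge.mk q (a * b) = FreeWedge.mk p a := by
      rw [← FreeWedge.smul_mk, ← hqb, ← hφs, ← hz', hpa]
    rcases FreeWedge.mk_eq_mk.1 h1 with ⟨hqp, hab⟩ | ⟨-, h0⟩
    · subst hqp
      have hbp : b • q = q := by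
        conv_rhs => rw [← hfφ q, hqb, f_mk]
      have hb : b ≠ 0 := by
        rintro rfl
        exact hp (by rw [← hfφ q, hqb, f_mk, zero_smul])
      have h2 : FreeWedge.mk q (b * b) = FreeWedge.mk q b := by
        rw [← FreeWedge.smul_mk, ← hqb, ← hφs, hbp, hqb]
      have hbb : b * b = b := by
        rcases FreeWedge.mk_eq_mk.1 h2 with ⟨-, h⟩ | ⟨-, h⟩
        · exact h
        · exact absurd h hb
      exact ⟨q, b, a, hp, hbb, hbp, hqb, hz'⟩
    · exact absurd h0 ha
  -- the index type
  refine ⟨{p : P // p ≠ 0 ∧ ∃ b : A, b * b = b ∧ b • p = p ∧ φ p = FreeWedge.mk p b},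
    fun i => Classical.choose i.2.2, Subtype.val, ?_, ?_, ?_, ?_, ?_⟩
  · exact fun i => (Classical.choose_spec i.2.2).1
  · exact fun i => (Classical.choose_spec i.2.2).2.1
  · intro y hy
    obtain ⟨p, b, a, hp, hbb, hbp, hφp, hy'⟩ := key y hy
    exact ⟨⟨p, hp, b, hbb, hbp, hφp⟩, a, hy'⟩
  · intro i j hij a b hab
    obtain ⟨hei, heip, hφi⟩ := Classical.choose_spec i.2.2
    obtain ⟨hej, hejp, hφj⟩ := Classical.choose_spec j.2.2
    have h1 : FreeWedge.mk i.val (a * Classical.choose i.2.2) = FreeWedge.mk j.val (b * Classical.choose j.2.2) := by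
      rw [← FreeWedge.smul_mk, ← FreeWedge.smul_mk, ← hφi, ← hφj, ← hφs, ← hφs, hab]
    rcases FreeWedge.mk_eq_mk.1 h1 with ⟨hval, -⟩ | ⟨h0, -⟩
    · exact absurd (Subtype.ext hval) hij
    · calc a • i.val = a • (Classical.choose i.2.2 • i.val) := by rw [heip]
        _ = (a * Classical.choose i.2.2) • i.val := by rw [mul_smul]
        _ = 0 := by rw [h0, zero_smul]
  · intro i a b
    obtain ⟨hei, heip, hφi⟩ := Classical.choose_spec i.2.2
    show a • i.val = b • i.val ↔ a * Classical.choose i.2.2 = b * Classical.choose i.2.2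
    constructor
    · intro h
      have h1 : FreeWedge.mk i.val (a * Classical.choose i.2.2) = FreeWedge.mk i.val (b * Classical.choose i.2.2) := by
        rw [← FreeWedge.smul_mk, ← FreeWedge.smul_mk, ← hφi, ← hφs, ← hφs, h]
      rcases FreeWedge.mk_eq_mk.1 h1 with ⟨-, h'⟩ | ⟨h1, h2⟩
      · exact h'
      · rw [h1, h2]
    · intro h
      calc a • i.val = (a * Classical.choose i.2.2) • i.val := by rw [mul_smul, heip]
        _ = (b * Classical.choose i.2.2) • i.val := by rw [h]
        _ = b • i.val := by rw [mul_smul, heip]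
end
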